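/- arXiv:1405.4019 — 2 statements merged into one kernel-verified Lean document; each statement's English description precedes it below -/
import Mathlib

section
/- Let n, k be natural numbers with n even, n = 2m + 2k, m ≥ 1, k ≥ 1. There exists a convex geometric graph on n vertices with exactly k·n edges, containing no k+1 pairwise disjoint edges, that admits an independent set of n − 2k consecutive vertices on the boundary of its convex hull. -/
open scoped Classical
open Real
set_option linter.unusedSectionVars false
set_option linter.unusedVariables false

/-- point on unit circle -/
noncomputable def pt (θ : ℝ) : ℝ × ℝ := (Real.cos θ, Real.sin θ)

/-- 2D cross product -/
def cr (u w : ℝ × ℝ) : ℝ := u.1 * w.2 - u.2 * w.1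

lemma ccw_eq (α β γ : ℝ) :
    cr (pt β - pt α) (pt γ - pt α)
      = 4 * sin ((β - α)/2) * sin ((γ - β)/2) * sin ((γ - α)/2) := by
  have h1 : β - α = 2 * ((β - α)/2) := by ring
  have h2 : γ - β = 2 * ((γ - β)/2) := by ring
  have h3 : γ - α = 2 * ((β - α)/2 + (γ - β)/2) := by ring
  have e1 : sin (β - α) = 2 * sin ((β-α)/2) * cos ((β-α)/2) := by
    have := sin_two_mul ((β-α)/2); rw [← h1] at this; exact this
  have e2 : sin (γ - β) = 2 * sin ((γ-β)/2) * cos ((γ-β)/2) := by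
    have := sin_two_mul ((γ-β)/2); rw [← h2] at this; exact this
  have e3 : sin (γ - α) = 2 * sin ((β-α)/2 + (γ-β)/2) * cos ((β-α)/2 + (γ-β)/2) := by
    have := sin_two_mul ((β-α)/2 + (γ-β)/2); rw [← h3] at this; exact this
  have key : cr (pt β - pt α) (pt γ - pt α) = sin (β - α) + sin (γ - β) - sin (γ - α) := by
    simp only [cr, pt, Prod.fst_sub, Prod.snd_sub, sin_sub, cos_sub]
    ring
  have h4 : (γ - α)/2 = (β - α)/2 + (γ - β)/2 := by ring
  rw [key, e1, e2, e3, h4, sin_add, cos_add]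
  have s1 := sin_sq_add_cos_sq ((β-α)/2)
  have s2 := sin_sq_add_cos_sq ((γ-β)/2)
  linear_combination (-2*sin ((γ-β)/2)*cos ((γ-β)/2))*s1 + (-2*sin ((β-α)/2)*cos ((β-α)/2))*s2

lemma ccw_pos {α β γ : ℝ} (h1 : α < β) (h2 : β < γ) (h3 : γ - α < 2*π) :
    0 < cr (pt β - pt α) (pt γ - pt α) := by
  rw [ccw_eq]
  have pi_pos := Real.pi_pos
  have := sin_pos_of_pos_of_lt_pi (x := (β - α)/2) (by linarith) (by linarith)
  have := sin_pos_of_pos_of_lt_pi (x := (γ - β)/2) (by linarith) (by linarith)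
  have := sin_pos_of_pos_of_lt_pi (x := (γ - α)/2) (by linarith) (by linarith)
  positivity

lemma ccw_nonneg {α β γ : ℝ} (h1 : α ≤ β) (h2 : β ≤ γ) (h3 : γ - α ≤ 2*π) :
    0 ≤ cr (pt β - pt α) (pt γ - pt α) := by
  rw [ccw_eq]
  have pi_pos := Real.pi_pos
  have := sin_nonneg_of_nonneg_of_le_pi (x := (β - α)/2) (by linarith) (by linarith)
  have := sin_nonneg_of_nonneg_of_le_pi (x := (γ - β)/2) (by linarith) (by linarith)
  have := sin_nonneg_of_nonneg_of_le_pi (x := (γ - α)/2) (by linarith) (by linarith)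
  positivity




/-- if B,D are strictly on opposite sides of line AC and A,C strictly on opposite
sides of line BD (expressed via ccw determinants), the segments AC, BD intersect. -/
lemma segments_cross {A B C D : ℝ × ℝ}
    (hABC : 0 < cr (B - A) (C - A)) (hABD : 0 < cr (B - A) (D - A))
    (hACD : 0 < cr (C - A) (D - A)) (hBCD : 0 < cr (C - B) (D - B)) :
    ¬ Disjoint (segment ℝ A C) (segment ℝ B D) := by
  set u := B - A with hu
  set r := C - A with hr
  set w := D - A with hw
  have hb : cr r u < 0 := by
    have : cr r u = -cr u r := by simp [cr]; ring
    rw [this]; linarith [hABC]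
  have hd : 0 < cr r w := hACD
  have hea : 0 < cr u w := hABD
  have hec : cr u w - (cr r w - cr r u) < 0 := by
    have : cr u w - (cr r w - cr r u) = -cr (C - B) (D - B) := by
      simp [cr, hu, hr, hw]; ring
    rw [this]; linarith
  set σ : ℝ := cr u w / (cr r w - cr r u) with hσ
  have hden : 0 < cr r w - cr r u := by linarith
  have hσ0 : 0 ≤ σ := by positivity
  have hσ1 : σ ≤ 1 := by
    rw [hσ, div_le_one hden]; linarith
  set τ : ℝ := -cr r u / (cr r w - cr r u) with hτ
  have hτ0 : 0 ≤ τ := by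
    apply div_nonneg (by linarith) (by linarith)
  have hτ1 : τ ≤ 1 := by
    rw [hτ, div_le_one hden]; linarith
  -- the common point
  set X : ℝ × ℝ := A + σ • (C - A) with hX
  have hX1 : X ∈ segment ℝ A C := by
    rw [segment_eq_image']
    exact ⟨σ, ⟨hσ0, hσ1⟩, rfl⟩
  have hX2 : X ∈ segment ℝ B D := by
    rw [segment_eq_image']
    refine ⟨τ, ⟨hτ0, hτ1⟩, ?_⟩
    -- A + σ • (C - A) = B + τ • (D - B)
    have hne : cr r w - cr r u ≠ 0 := ne_of_gt hden
    rw [hX]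
    apply Prod.ext
    · show B.1 + τ * (D - B).1 = A.1 + σ * (C - A).1
      rw [hσ, hτ]
      field_simp
      simp only [cr, hu, hr, hw, Prod.fst_sub, Prod.snd_sub]
      ring
    · show B.2 + τ * (D - B).2 = A.2 + σ * (C - A).2
      rw [hσ, hτ]
      field_simp
      simp only [cr, hu, hr, hw, Prod.fst_sub, Prod.snd_sub]
      ring
  rw [Set.not_disjoint_iff]
  exact ⟨X, hX1, hX2⟩





section VM
variable {n : ℕ} [NeZero n]

noncomputable def vm (n : ℕ) [NeZero n] : ZMod n → ℝ × ℝ :=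
  fun i => pt (2 * π * i.val / n)

lemma npos : 0 < (n:ℝ) := by
  have := Nat.pos_of_ne_zero (NeZero.ne n); exact_mod_cast this

lemma theta_lt {a b : ℕ} (h : a < b) : 2 * π * a / n < 2 * π * b / n := by
  have hn : 0 < (n:ℝ) := npos
  have hπ := Real.pi_pos
  have hab : (a:ℝ) < b := by exact_mod_cast h
  have h2 : 2 * π * a < 2 * π * b := by nlinarith
  exact div_lt_div_of_pos_right h2 hn

lemma theta_diff_lt {a b : ℕ} (ha : a < n) :
    2 * π * a / n - 2 * π * b / n < 2 * π := by
  have hn : 0 < (n:ℝ) := npos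
  have hπ := Real.pi_pos
  have ha' : (a:ℝ) < n := by exact_mod_cast ha
  have hb' : (0:ℝ) ≤ b := by positivity
  rw [div_sub_div_same, div_lt_iff₀ hn]
  nlinarith

lemma cos_diff_lt_one {a b : ℕ} (ha : a < n) (hb : b < n) (hne : a ≠ b) :
    cos (2 * π * a / n - 2 * π * b / n) < 1 := by
  rcases (cos_le_one (2 * π * a / n - 2 * π * b / n)).lt_or_eq with h | h
  · exact h
  · exfalso
    obtain ⟨z, hz⟩ := (Real.cos_eq_one_iff _).mp h
    have hn : 0 < (n:ℝ) := npos
    have hπ := Real.pi_pos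
    have hlt : 2 * π * a / n - 2 * π * b / n < 2 * π := theta_diff_lt ha
    have hgt : -(2 * π) < 2 * π * a / n - 2 * π * b / n := by
      have := theta_diff_lt (a := b) (b := a) hb; linarith
    rw [← hz] at hlt hgt
    have hz0 : z = 0 := by
      rcases lt_trichotomy z 0 with h' | h' | h'
      · exfalso
        have hz1 : z ≤ -1 := by omega
        have : (z:ℝ) ≤ -1 := by exact_mod_cast hz1
        nlinarith
      · exact h'
      · exfalso
        have hz1 : 1 ≤ z := h'
        have : (1:ℝ) ≤ z := by exact_mod_cast hz1
        nlinarith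
    rw [hz0] at hz
    simp only [Int.cast_zero, zero_mul] at hz
    rcases Nat.lt_or_ge a b with h' | h'
    · have := theta_lt (n := n) h'; linarith
    · have h'' : b < a := by omega
      have := theta_lt (n := n) h''; linarith

lemma vm_inj : Function.Injective (vm n) := by
  intro a b hab
  by_contra hne
  have hv : a.val ≠ b.val := fun h => hne (ZMod.val_injective n h)
  have h1 : cos (2 * π * a.val / n) = cos (2 * π * b.val / n) := congrArg Prod.fst hab
  have h2 : sin (2 * π * a.val / n) = sin (2 * π * b.val / n) := congrArg Prod.snd hab
  have hc : cos (2 * π * a.val / n - 2 * π * b.val / n) = 1 := by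
    rw [cos_sub, h1, h2]
    have := sin_sq_add_cos_sq (2 * π * (b.val:ℝ) / n); nlinarith
  exact absurd hc (ne_of_lt (cos_diff_lt_one (ZMod.val_lt a) (ZMod.val_lt b) hv))

end VM

section VM2
variable {n : ℕ} [NeZero n]

lemma theta_le {a b : ℕ} (h : a ≤ b) : 2 * π * a / n ≤ 2 * π * b / n := by
  rcases h.lt_or_eq with h | h
  · exact (theta_lt h).le
  · rw [h]

lemma theta_nonneg (a : ℕ) : 0 ≤ 2 * π * (a:ℝ) / n := by
  have := Real.pi_pos; have : (0:ℝ) ≤ a := by positivity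
  positivity

lemma pt_add_two_pi (x : ℝ) : pt (x + 2*π) = pt x := by
  simp [pt, cos_add_two_pi, sin_add_two_pi]

lemma vm_succ (i : ZMod n) : vm n (i + 1) = pt (2 * π * ((i.val:ℝ) + 1) / n) := by
  have hural : ((i.val : ℕ) : ZMod n) = i := by rw [ZMod.natCast_val, ZMod.cast_id]
  have hvlt := ZMod.val_lt i
  have hcast : (i + 1 : ZMod n) = ((i.val + 1 : ℕ) : ZMod n) := by push_cast [hural]; ring
  rcases Nat.lt_or_ge (i.val + 1) n with h | h
  · rw [hcast]; unfold vm; rw [ZMod.val_cast_of_lt h]; push_cast; ring_nf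
  · have hn : i.val + 1 = n := by omega
    rw [hcast, hn, ZMod.natCast_self]
    show pt (2 * π * (((0:ZMod n).val : ℕ):ℝ) / n) = _
    rw [ZMod.val_zero]
    have hne : (n:ℝ) ≠ 0 := ne_of_gt npos
    have hx : 2 * π * ((i.val:ℝ) + 1) / n = 0 + 2 * π := by
      have : ((i.val:ℝ) + 1) = (n:ℝ) := by exact_mod_cast congrArg (Nat.cast : ℕ → ℝ) hn
      rw [this]; field_simp; ring
    rw [hx, pt_add_two_pi]; norm_num

/-- not in hull of the others -/
lemma vm_not_mem_hull (i : ZMod n) :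
    vm n i ∉ convexHull ℝ (vm n '' {j | j ≠ i}) := by
  set A := vm n i with hA
  set g : ℝ × ℝ → ℝ := fun p => A.1 * p.1 + A.2 * p.2 with hg
  have hlin : IsLinearMap ℝ g := by
    constructor
    · intro x y; simp [hg]; ring
    · intro c x; simp [hg, smul_eq_mul]; ring
  have himg : vm n '' {j | j ≠ i} ⊆ {p | g p < 1} := by
    rintro p ⟨l, hl, rfl⟩
    have hval : l.val ≠ i.val := fun h => hl (ZMod.val_injective n h)
    have hgl : g (vm n l) = cos (2 * π * i.val / n - 2 * π * l.val / n) := by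
      simp [hg, hA, vm, pt, cos_sub]
    rw [Set.mem_setOf_eq, hgl]
    exact cos_diff_lt_one (ZMod.val_lt i) (ZMod.val_lt l) (fun h => hval h.symm)
  intro hmem
  have hlt := convexHull_min himg (convex_halfSpace_lt hlin 1) hmem
  rw [Set.mem_setOf_eq] at hlt
  have hgA : g A = 1 := by
    have hA' : A = (cos (2 * π * (i.val:ℝ) / n), sin (2 * π * (i.val:ℝ) / n)) := rfl
    show A.1 * A.1 + A.2 * A.2 = 1
    rw [hA']
    have := sin_sq_add_cos_sq (2 * π * (i.val:ℝ) / n); nlinarith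
  linarith

/-- all vertices weakly to the left of directed edge i → i+1 -/
lemma vm_edge_le (i : ZMod n) (l : ZMod n) :
    0 ≤ cr (vm n (i+1) - vm n i) (vm n l - vm n i) := by
  have hπ := Real.pi_pos
  have hnr : 0 < (n:ℝ) := npos
  have hvlt := ZMod.val_lt i
  have hlval := ZMod.val_lt l
  set α : ℝ := 2 * π * i.val / n with hα
  set ψ : ℝ := 2 * π * ((i.val:ℝ) + 1) / n with hψ
  have hB : vm n (i+1) = pt ψ := vm_succ i
  have hA : vm n i = pt α := rfl
  have hαψ : α ≤ ψ := by
    have := theta_le (n := n) (a := i.val) (b := i.val + 1) (by omega)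
    rw [hα, hψ]; push_cast at this ⊢; linarith
  rcases Nat.lt_or_ge i.val l.val with h | h
  · -- θl ≥ ψ
    have hθ : vm n l = pt (2 * π * (l.val:ℝ) / n) := rfl
    rw [hA, hB, hθ]
    apply ccw_nonneg hαψ
    · rw [hψ]
      have := theta_le (n := n) (a := i.val + 1) (b := l.val) (by omega)
      push_cast at this ⊢; linarith
    · have := theta_diff_lt (n := n) (a := l.val) (b := i.val) hlval
      rw [hα]; linarith
  · -- l.val ≤ i.val : lift γ by 2π
    have hθ : vm n l = pt (2 * π * (l.val:ℝ) / n + 2*π) := by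
      rw [pt_add_two_pi]; rfl
    rw [hA, hB, hθ]
    apply ccw_nonneg  hαψ
    · -- ψ ≤ θl + 2π
      have h1 : ψ ≤ 2 * π := by
        rw [hψ]
        have hsucc : (i.val:ℝ) + 1 ≤ n := by exact_mod_cast hvlt
        rw [div_le_iff₀ hnr]; nlinarith
      have h2 : 0 ≤ 2 * π * (l.val:ℝ) / n := theta_nonneg l.val
      linarith
    · -- θl + 2π - α ≤ 2π  i.e. θl ≤ α
      have := theta_le (n := n) (a := l.val) (b := i.val) h
      rw [hα]; linarith

/-- the edge lies on the frontier of the hull -/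
lemma vm_edge_frontier (hn2 : 1 < n) (i : ZMod n) :
    segment ℝ (vm n i) (vm n (i+1)) ⊆ frontier (convexHull ℝ (Set.range (vm n))) := by
  haveI : Fact (1 < n) := ⟨hn2⟩
  set A := vm n i with hA
  set B := vm n (i+1) with hB
  set w : ℝ × ℝ := B - A with hw
  have hABne : B ≠ A := by
    intro h
    have := vm_inj (n := n) h
    have h1 : (1 : ZMod n) ≠ 0 := by
      intro h10
      have := congrArg ZMod.val h10
      rw [ZMod.val_one n, ZMod.val_zero] at this
      omega
    exact h1 (by linear_combination this)
  have hwne : w ≠ 0 := sub_ne_zero_of_ne hABne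
  have hwpos : 0 < w.1^2 + w.2^2 := by
    rcases lt_trichotomy (w.1^2 + w.2^2) 0 with h | h | h
    · nlinarith [sq_nonneg w.1, sq_nonneg w.2]
    · exfalso
      apply hwne
      have h1 : w.1 = 0 := by nlinarith [sq_nonneg w.1, sq_nonneg w.2]
      have h2 : w.2 = 0 := by nlinarith [sq_nonneg w.1, sq_nonneg w.2]
      exact Prod.ext h1 h2
    · exact h
  set g : ℝ × ℝ → ℝ := fun p => cr w p with hg
  have hlin : IsLinearMap ℝ g := by
    constructor
    · intro x y; simp [hg, cr]; ring
    · intro c x; simp [hg, cr, smul_eq_mul]; ring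
  have hcr_sub : ∀ p q : ℝ × ℝ, cr w (p - q) = g p - g q := by
    intro p q; simp [hg, cr]; ring
  have hrange : Set.range (vm n) ⊆ {p | g A ≤ g p} := by
    rintro p ⟨l, rfl⟩
    have := vm_edge_le (n := n) i l
    rw [Set.mem_setOf_eq]
    rw [← hw] at this
    rw [hcr_sub (vm n l) A] at this
    linarith
  have hhull : convexHull ℝ (Set.range (vm n)) ⊆ {p | g A ≤ g p} :=
    convexHull_min hrange (convex_halfSpace_ge hlin (g A))
  intro x hx
  have hxhull : x ∈ convexHull ℝ (Set.range (vm n)) :=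
    segment_subset_convexHull (Set.mem_range_self i) (Set.mem_range_self (i+1)) hx
  have hgx : g x = g A := by
    rw [segment_eq_image'] at hx
    obtain ⟨t, _, rfl⟩ := hx
    show cr w (A + t • (B - A)) = cr w A
    rw [← hw]
    simp only [cr, Prod.fst_add, Prod.snd_add, Prod.smul_fst, Prod.smul_snd, smul_eq_mul]
    ring
  rw [((Set.finite_range (vm n)).isClosed_convexHull (𝕜 := ℝ)).frontier_eq]
  refine ⟨hxhull, ?_⟩
  intro hint
  obtain ⟨ε, hε, hball⟩ := Metric.isOpen_iff.mp isOpen_interior x hint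
  have hwn : (0:ℝ) ≤ ‖w‖ := norm_nonneg w
  set δ : ℝ := ε / (2 * (‖w‖ + 1)) with hδ
  have hδpos : 0 < δ := by positivity
  set y : ℝ × ℝ := x + δ • (w.2, -w.1) with hy
  have hyball : y ∈ Metric.ball x ε := by
    rw [Metric.mem_ball, dist_eq_norm]
    have h1 : y - x = δ • (w.2, -w.1) := by rw [hy]; abel
    rw [h1, norm_smul]
    have h2 : ‖(w.2, -w.1)‖ = ‖w‖ := by
      rw [Prod.norm_def, Prod.norm_def]
      simp [Real.norm_eq_abs, abs_neg, max_comm]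
    rw [h2, Real.norm_eq_abs, abs_of_pos hδpos, hδ]
    rw [div_mul_eq_mul_div, div_lt_iff₀ (by positivity)]
    nlinarith
  have hyhull : y ∈ convexHull ℝ (Set.range (vm n)) := interior_subset (hball hyball)
  have hgy : g A ≤ g y := hhull hyhull
  have hgy2 : g y = g x - δ * (w.1^2 + w.2^2) := by
    rw [hy]
    simp only [hg, cr, Prod.fst_add, Prod.snd_add, Prod.smul_fst, Prod.smul_snd, smul_eq_mul]
    ring
  rw [hgy2, hgx] at hgy
  nlinarith

end VM2


section Cross
variable {n : ℕ} [NeZero n]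

lemma vm_cast_eq {a : ℕ} (ha : a < n) : vm n (a : ZMod n) = pt (2 * π * a / n) := by
  unfold vm; rw [ZMod.val_cast_of_lt ha]

lemma vm_cross {a b c d : ℕ} (hab : a < b) (hbc : b < c) (hcd : c < d) (hdn : d < n) :
    ¬ Disjoint (segment ℝ (vm n (a : ZMod n)) (vm n (c : ZMod n)))
      (segment ℝ (vm n (b : ZMod n)) (vm n (d : ZMod n))) := by
  have han : a < n := by omega
  have hbn : b < n := by omega
  have hcn : c < n := by omega
  rw [vm_cast_eq han, vm_cast_eq hbn, vm_cast_eq hcn, vm_cast_eq hdn]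
  have h1 : 2*π*(a:ℝ)/n < 2*π*b/n := theta_lt hab
  have h2 : 2*π*(b:ℝ)/n < 2*π*c/n := theta_lt hbc
  have h3 : 2*π*(c:ℝ)/n < 2*π*d/n := theta_lt hcd
  have hda : 2*π*(d:ℝ)/n - 2*π*a/n < 2*π := theta_diff_lt hdn
  have hca : 2*π*(c:ℝ)/n - 2*π*a/n < 2*π := theta_diff_lt hcn
  have hdb : 2*π*(d:ℝ)/n - 2*π*b/n < 2*π := theta_diff_lt hdn
  exact segments_cross
    (ccw_pos h1 h2 (by linarith))
    (ccw_pos h1 (by linarith) (by linarith))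
    (ccw_pos (by linarith) h3 (by linarith))
    (ccw_pos h2 h3 (by linarith))

end Cross


/-- System of distinct even representatives for a laminar family of intervals. -/
lemma sdr_lemma (T : Finset (ℕ × ℕ))
    (h1 : ∀ p ∈ T, p.1 < p.2)
    (h2 : ∀ p ∈ T, ∀ q ∈ T, p ≠ q →
      p.1 ≠ q.1 ∧ p.1 ≠ q.2 ∧ p.2 ≠ q.1 ∧ p.2 ≠ q.2)
    (h3 : ∀ p ∈ T, ∀ q ∈ T, ¬ (p.1 < q.1 ∧ q.1 < p.2 ∧ p.2 < q.2)) :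
    ∃ φ : ℕ × ℕ → ℕ, Set.InjOn φ T ∧
      ∀ p ∈ T, Even (φ p) ∧ φ p ∈ Finset.Icc p.1 p.2 := by
  classical
  induction T using Finset.strongInduction with
  | _ T ih =>
    rcases T.eq_empty_or_nonempty with rfl | hne
    · exact ⟨fun _ => 0, by simp, by simp⟩
    · obtain ⟨f0, hf0, hmax⟩ := T.exists_max_image (fun p => p.2) hne
      set T' := T.erase f0 with hT'
      have hsub : T' ⊂ T := Finset.erase_ssubset hf0
      have hsub' : T' ⊆ T := Finset.erase_subset _ _
      obtain ⟨φ', hinj', hφ'⟩ := ih T' hsub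
        (fun p hp => h1 p (hsub' hp))
        (fun p hp q hq => h2 p (hsub' hp) q (hsub' hq))
        (fun p hp q hq => h3 p (hsub' hp) q (hsub' hq))
      -- every other interval is inside f0's or entirely to its left
      have hloc : ∀ q ∈ T', q.2 < f0.1 ∨ (f0.1 < q.1 ∧ q.2 < f0.2) := by
        intro q hq
        have hqT := hsub' hq
        have hqne : q ≠ f0 := Finset.ne_of_mem_erase hq
        have hd := h2 q hqT f0 hf0 hqne
        have hq2 : q.2 < f0.2 := lt_of_le_of_ne (hmax q hqT) hd.2.2.2
        rcases lt_trichotomy q.1 f0.1 with h | h | h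
        · left
          by_contra hcon
          push_neg at hcon
          have : f0.1 < q.2 := lt_of_le_of_ne hcon (Ne.symm hd.2.2.1)
          exact h3 q hqT f0 hf0 ⟨h, this, hq2⟩
        · exact absurd h hd.1
        · right; exact ⟨h, hq2⟩
      set Tin := T'.filter (fun q => f0.1 < q.1) with hTin
      have hTin_sub : Tin ⊆ T' := Finset.filter_subset _ _
      -- vertices of Tin are inside the open interval of f0
      have hTin_in : ∀ q ∈ Tin, f0.1 < q.1 ∧ q.1 < q.2 ∧ q.2 < f0.2 := by
        intro q hq
        rw [hTin, Finset.mem_filter] at hq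
        obtain ⟨hq1, hq2⟩ := hq
        have h12 := h1 q (hsub' hq1)
        rcases hloc q hq1 with h | h
        · omega
        · exact ⟨h.1, h12, h.2⟩
      -- counting: the interval of f0 contains 2|Tin| + 2 distinct points
      have hcount : 2 * Tin.card + 2 ≤ f0.2 - f0.1 + 1 := by
        set EP : Finset ℕ := Tin.biUnion (fun p => {p.1, p.2}) with hEP
        have hEPcard : EP.card = 2 * Tin.card := by
          rw [hEP, Finset.card_biUnion]
          · rw [Finset.sum_congr rfl (fun p hp => ?_), Finset.sum_const, smul_eq_mul, mul_comm]
            have := h1 p (hsub' (hTin_sub hp))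
            rw [Finset.card_insert_of_notMem (by simp [Finset.mem_singleton]; omega),
              Finset.card_singleton]
          · intro p hp q hq hne'
            have := h2 p (hsub' (hTin_sub hp)) q (hsub' (hTin_sub hq)) hne'
            simp only [Finset.disjoint_left, Finset.mem_insert, Finset.mem_singleton]
            rintro a (rfl | rfl) (h' | h') <;> omega
        have hEPsub : EP ∪ {f0.1, f0.2} ⊆ Finset.Icc f0.1 f0.2 := by
          intro a ha
          rw [Finset.mem_union] at ha
          rcases ha with ha | ha
          · rw [hEP, Finset.mem_biUnion] at ha
            obtain ⟨p, hp, hap⟩ := ha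
            have := hTin_in p hp
            simp only [Finset.mem_insert, Finset.mem_singleton] at hap
            rw [Finset.mem_Icc]; rcases hap with rfl | rfl <;> omega
          · simp only [Finset.mem_insert, Finset.mem_singleton] at ha
            have := h1 f0 hf0
            rw [Finset.mem_Icc]; rcases ha with rfl | rfl <;> omega
        have hdisj : Disjoint EP ({f0.1, f0.2} : Finset ℕ) := by
          rw [Finset.disjoint_right]
          intro a ha haEP
          rw [hEP, Finset.mem_biUnion] at haEP
          obtain ⟨p, hp, hap⟩ := haEP
          have := hTin_in p hp
          simp only [Finset.mem_insert, Finset.mem_singleton] at ha hap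
          rcases ha with rfl | rfl <;> rcases hap with h' | h' <;> omega
        have hc2 : ({f0.1, f0.2} : Finset ℕ).card = 2 := by
          rw [Finset.card_insert_of_notMem (by simp [Finset.mem_singleton]; exact (h1 f0 hf0).ne),
            Finset.card_singleton]
        have := Finset.card_le_card hEPsub
        rw [Finset.card_union_of_disjoint hdisj, hEPcard, hc2, Nat.card_Icc] at this
        omega
      -- fresh even value for f0
      set c := Tin.card with hc
      set e0 : ℕ := if Even f0.1 then f0.1 else f0.1 + 1 with he0
      have he0even : Even e0 := by
        rw [he0]; split
        · assumption
        · rename_i h; rw [Nat.even_add_one]; exact h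
      have he0ge : f0.1 ≤ e0 := by rw [he0]; split <;> omega
      have he0le : e0 ≤ f0.1 + 1 := by rw [he0]; split <;> omega
      set Ev : Finset ℕ := (Finset.range (c+1)).image (fun i => e0 + 2*i) with hEv
      have hEvsub : ∀ x ∈ Ev, Even x ∧ x ∈ Finset.Icc f0.1 f0.2 := by
        intro x hx
        rw [hEv, Finset.mem_image] at hx
        obtain ⟨i, hi, rfl⟩ := hx
        rw [Finset.mem_range] at hi
        constructor
        · obtain ⟨r, hr⟩ := he0even; exact ⟨r + i, by omega⟩
        · rw [Finset.mem_Icc]; omega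
      have hEvcard : Ev.card = c + 1 := by
        rw [hEv, Finset.card_image_of_injective _ (fun a b h => by omega),
          Finset.card_range]
      set V : Finset ℕ := Tin.image φ' with hV
      have hVcard : V.card ≤ c := (Finset.card_image_le).trans_eq rfl
      have : ∃ x ∈ Ev, x ∉ V := by
        by_contra hcon
        push_neg at hcon
        have := Finset.card_le_card hcon
        omega
      obtain ⟨x, hxEv, hxV⟩ := this
      refine ⟨Function.update φ' f0 x, ?_, ?_⟩
      · -- injectivity
        intro p hp q hq hpq
        rw [Finset.mem_coe] at hp hq
        rcases eq_or_ne p f0 with hpe | hpne <;> rcases eq_or_ne q f0 with hqe | hqne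
        · rw [hpe, hqe]
        · exfalso
          subst hpe
          have hqT' : q ∈ T' := Finset.mem_erase.mpr ⟨hqne, hq⟩
          rw [Function.update_self, Function.update_of_ne hqne] at hpq
          rcases hloc q hqT' with h | h
          · have := (hφ' q hqT').2
            rw [Finset.mem_Icc] at this
            have := hEvsub x hxEv
            rw [Finset.mem_Icc] at this
            omega
          · apply hxV
            rw [hV, Finset.mem_image]
            exact ⟨q, by rw [hTin, Finset.mem_filter]; exact ⟨hqT', h.1⟩, hpq.symm⟩
        · exfalso
          subst hqe
          have hpT' : p ∈ T' := Finset.mem_erase.mpr ⟨hpne, hp⟩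
          rw [Function.update_self, Function.update_of_ne hpne] at hpq
          rcases hloc p hpT' with h | h
          · have := (hφ' p hpT').2
            rw [Finset.mem_Icc] at this
            have := hEvsub x hxEv
            rw [Finset.mem_Icc] at this
            omega
          · apply hxV
            rw [hV, Finset.mem_image]
            exact ⟨p, by rw [hTin, Finset.mem_filter]; exact ⟨hpT', h.1⟩, hpq⟩
        · rw [Function.update_of_ne hpne, Function.update_of_ne hqne] at hpq
          exact hinj' (Finset.mem_coe.mpr (Finset.mem_erase.mpr ⟨hpne, hp⟩))
            (Finset.mem_coe.mpr (Finset.mem_erase.mpr ⟨hqne, hq⟩)) hpq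
      · intro p hp
        rcases eq_or_ne p f0 with rfl | hpne
        · rw [Function.update_self]
          exact hEvsub x hxEv
        · rw [Function.update_of_ne hpne]
          exact hφ' p (Finset.mem_erase.mpr ⟨hpne, hp⟩)







def ConvexCyclic {n : ℕ} (v : ZMod n → ℝ × ℝ) : Prop :=
  Function.Injective v ∧
  (∀ i : ZMod n, v i ∉ convexHull ℝ (v '' {j | j ≠ i})) ∧
  (∀ i : ZMod n, segment ℝ (v i) (v (i + 1)) ⊆ frontier (convexHull ℝ (Set.range v)))

noncomputable def segOf {n : ℕ} (v : ZMod n → ℝ × ℝ) (e : Sym2 (ZMod n)) : Set (ℝ × ℝ) :=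
  Sym2.lift ⟨fun i j => segment ℝ (v i) (v j), fun i j => segment_symm ℝ (v i) (v j)⟩ e

noncomputable def arcFrom (n : ℕ) (a : ZMod n) (q : ℕ) : Finset (ZMod n) :=
  (Finset.range q).image fun i => a + (i : ZMod n)

def NoDisjointEdges {n : ℕ} (v : ZMod n → ℝ × ℝ) (E : Finset (Sym2 (ZMod n)))
    (k : ℕ) : Prop :=
  ¬ ∃ S ⊆ E, S.card = k + 1 ∧
    (S : Set (Sym2 (ZMod n))).Pairwise fun e f => Disjoint (segOf v e) (segOf v f)

-- ================================================

section Comb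
variable {n : ℕ} [NeZero n]

/-- canonical (min val, max val) of an edge -/
noncomputable def pr : Sym2 (ZMod n) → ℕ × ℕ :=
  Sym2.lift ⟨fun x y => (min x.val y.val, max x.val y.val),
    fun x y => by dsimp only; rw [min_comm, max_comm]⟩

lemma cast_val_self (x : ZMod n) : ((x.val : ℕ) : ZMod n) = x := by
  rw [ZMod.natCast_val, ZMod.cast_id]

lemma pr_of_mk (x y : ZMod n) : pr s(x, y) = (min x.val y.val, max x.val y.val) :=
  Sym2.lift_mk _ _ _

lemma pr_mem (e : Sym2 (ZMod n)) :
    (((pr e).1 : ZMod n) ∈ e) ∧ (((pr e).2 : ZMod n) ∈ e) := by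
  induction e using Sym2.ind with
  | _ x y =>
    rw [pr_of_mk]
    rcases le_total x.val y.val with h | h
    · simp only [min_eq_left h, max_eq_right h, cast_val_self]
      exact ⟨Sym2.mem_mk_left x y, Sym2.mem_mk_right x y⟩
    · simp only [min_eq_right h, max_eq_left h, cast_val_self]
      exact ⟨Sym2.mem_mk_right x y, Sym2.mem_mk_left x y⟩

lemma pr_le (e : Sym2 (ZMod n)) : (pr e).1 ≤ (pr e).2 := by
  induction e using Sym2.ind with
  | _ x y => rw [pr_of_mk]; exact min_le_max

lemma pr_lt_n (e : Sym2 (ZMod n)) : (pr e).2 < n := by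
  induction e using Sym2.ind with
  | _ x y => rw [pr_of_mk]; exact max_lt (ZMod.val_lt x) (ZMod.val_lt y)

lemma seg_pr (e : Sym2 (ZMod n)) :
    segOf (vm n) e = segment ℝ (vm n ((pr e).1 : ZMod n)) (vm n ((pr e).2 : ZMod n)) := by
  induction e using Sym2.ind with
  | _ x y =>
    have h1 : segOf (vm n) s(x,y) = segment ℝ (vm n x) (vm n y) := rfl
    rw [h1, pr_of_mk]
    rcases le_total x.val y.val with h | h
    · simp only [min_eq_left h, max_eq_right h, cast_val_self]
    · simp only [min_eq_right h, max_eq_left h, cast_val_self]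
      exact segment_symm ℝ _ _

end Comb

section Main
variable (n m k : ℕ) [NeZero n]

def Wf : Finset (ZMod n) := (Finset.Icc (2*m-1) (n-1)).image (Nat.cast : ℕ → ZMod n)

def E1f : Finset (Sym2 (ZMod n)) := (Wf n m).offDiag.image Sym2.mk.uncurry

def E2f : Finset (Sym2 (ZMod n)) :=
  ((Finset.range (2*m-1)) ×ˢ (Finset.range k)).image
    (fun p => s(((p.1 : ℕ) : ZMod n), ((2*m + 2*p.2 : ℕ) : ZMod n)))

def Ef : Finset (Sym2 (ZMod n)) := E1f n m ∪ E2f n m k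

end Main

section MainProofs
variable {n m k : ℕ} [NeZero n] (hn : n = 2*m + 2*k) (hm : 1 ≤ m) (hk : 1 ≤ k)
include hn hm hk

lemma mem_Wf {x : ZMod n} : x ∈ Wf n m ↔ 2*m-1 ≤ x.val := by
  constructor
  · rintro hx
    rw [Wf, Finset.mem_image] at hx
    obtain ⟨a, ha, rfl⟩ := hx
    rw [Finset.mem_Icc] at ha
    rw [ZMod.val_cast_of_lt (by omega)]
    exact ha.1
  · intro hx
    rw [Wf, Finset.mem_image]
    exact ⟨x.val, by rw [Finset.mem_Icc]; exact ⟨hx, by have := ZMod.val_lt x; omega⟩,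
      cast_val_self x⟩

lemma mem_E1f {e : Sym2 (ZMod n)} (he : e ∈ E1f n m) :
    2*m-1 ≤ (pr e).1 ∧ (pr e).1 < (pr e).2 := by
  rw [E1f, Finset.mem_image] at he
  obtain ⟨⟨x, y⟩, hxy, rfl⟩ := he
  rw [Finset.mem_offDiag] at hxy
  obtain ⟨hx, hy, hne⟩ := hxy
  rw [mem_Wf hn hm hk] at hx hy
  have hvne : x.val ≠ y.val := fun h => hne (ZMod.val_injective n h)
  rw [Function.uncurry_apply_pair, pr_of_mk]
  constructor
  · exact le_min hx hy
  · rcases Nat.lt_or_ge x.val y.val with h | h <;>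
      simp only [min_def, max_def] <;> split <;> omega

lemma mem_E2f {e : Sym2 (ZMod n)} (he : e ∈ E2f n m k) :
    ∃ a j : ℕ, a < 2*m-1 ∧ j < k ∧ pr e = (a, 2*m + 2*j) := by
  rw [E2f, Finset.mem_image] at he
  obtain ⟨⟨a, j⟩, haj, rfl⟩ := he
  rw [Finset.mem_product, Finset.mem_range, Finset.mem_range] at haj
  obtain ⟨ha, hj⟩ := haj
  refine ⟨a, j, ha, hj, ?_⟩
  rw [pr_of_mk, ZMod.val_cast_of_lt (by omega), ZMod.val_cast_of_lt (by omega)]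
  have h1 : a < 2*m + 2*j := by omega
  rw [min_eq_left h1.le, max_eq_right h1.le]

lemma Wf_card : (Wf n m : Finset (ZMod n)).card = 2*k + 1 := by
  rw [Wf, Finset.card_image_of_injOn, Nat.card_Icc]
  · omega
  · intro a ha b hb hab
    rw [Finset.mem_coe, Finset.mem_Icc] at ha hb
    have := congrArg ZMod.val hab
    rwa [ZMod.val_cast_of_lt (by omega), ZMod.val_cast_of_lt (by omega)] at this

lemma E1f_card : (E1f n m : Finset (Sym2 (ZMod n))).card = k * (2*k+1) := by
  rw [E1f, Sym2.card_image_offDiag, Wf_card hn hm hk, Nat.choose_two_right]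
  have h1 : 2*k+1-1 = 2*k := by omega
  rw [h1]
  have h2 : (2*k+1) * (2*k) = k * (2*k+1) * 2 := by ring
  rw [h2, Nat.mul_div_cancel _ (by norm_num)]

lemma E2f_card : (E2f n m k : Finset (Sym2 (ZMod n))).card = (2*m-1) * k := by
  rw [E2f, Finset.card_image_of_injOn]
  · rw [Finset.card_product, Finset.card_range, Finset.card_range]
  · rintro ⟨a, j⟩ ha ⟨b, i⟩ hb hab
    rw [Finset.mem_coe, Finset.mem_product, Finset.mem_range, Finset.mem_range] at ha hb
    have := congrArg pr hab
    rw [pr_of_mk, pr_of_mk] at this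
    rw [ZMod.val_cast_of_lt (by omega), ZMod.val_cast_of_lt (by omega),
      ZMod.val_cast_of_lt (by omega), ZMod.val_cast_of_lt (by omega)] at this
    have h1 : min a (2*m+2*j) = a := min_eq_left (by omega)
    have h2 : max a (2*m+2*j) = 2*m+2*j := max_eq_right (by omega)
    have h3 : min b (2*m+2*i) = b := min_eq_left (by omega)
    have h4 : max b (2*m+2*i) = 2*m+2*i := max_eq_right (by omega)
    rw [h1, h2, h3, h4] at this
    simp only [Prod.mk.injEq] at this
    exact Prod.ext this.1 (by omega)

lemma E1f_E2f_disjoint : Disjoint (E1f n m) (E2f n m k) := by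
  rw [Finset.disjoint_right]
  intro e he2 he1
  obtain ⟨a, j, ha, hj, hpr⟩ := mem_E2f hn hm hk he2
  have := (mem_E1f hn hm hk he1).1
  rw [hpr] at this
  omega

lemma Ef_card : (Ef n m k : Finset (Sym2 (ZMod n))).card = k * n := by
  rw [Ef, Finset.card_union_of_disjoint (E1f_E2f_disjoint hn hm hk),
    E1f_card hn hm hk, E2f_card hn hm hk]
  cases m with
  | zero => omega
  | succ m' =>
    have h1 : 2 * Nat.succ m' - 1 = 2*m' + 1 := by omega
    rw [h1, hn]
    ring

lemma Ef_not_diag : ∀ e ∈ Ef n m k, ¬ e.IsDiag := by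
  intro e he
  rw [Ef, Finset.mem_union] at he
  rcases he with he | he
  · rw [E1f, Finset.mem_image] at he
    obtain ⟨⟨x, y⟩, hxy, rfl⟩ := he
    rw [Finset.mem_offDiag] at hxy
    rw [Function.uncurry_apply_pair, Sym2.mk_isDiag_iff]
    exact hxy.2.2
  · obtain ⟨a, j, ha, hj, hpr⟩ := mem_E2f hn hm hk he
    intro hd
    have h1 := pr_mem e
    induction e using Sym2.ind with
    | _ x y =>
      rw [Sym2.mk_isDiag_iff] at hd
      rw [pr_of_mk] at hpr
      rw [hd] at hpr
      simp only [min_self, max_self, Prod.mk.injEq] at hpr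
      omega

end MainProofs

section Glue
variable {n : ℕ} [NeZero n]

lemma mem_segOf {c : ZMod n} {e : Sym2 (ZMod n)} (hc : c ∈ e) :
    vm n c ∈ segOf (vm n) e := by
  induction e using Sym2.ind with
  | _ x y =>
    rw [Sym2.mem_iff] at hc
    have h1 : segOf (vm n) s(x,y) = segment ℝ (vm n x) (vm n y) := rfl
    rw [h1]
    rcases hc with rfl | rfl
    · exact left_mem_segment ℝ _ _
    · exact right_mem_segment ℝ _ _

end Glue

set_option maxHeartbeats 2000000 in
/-- Theorem 1.3(1) (existence, even case): for `n = 2m + 2k` with `m, k ≥ 1`, there is a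
convex geometric graph on `n` vertices with exactly `k·n` edges, no `k+1` pairwise
disjoint edges, and an independent arc of `n − 2k` consecutive boundary vertices. -/
theorem exists_maximal_cgg_free_arc (n m k : ℕ) [NeZero n] (hn : n = 2 * m + 2 * k)
    (hm : 1 ≤ m) (hk : 1 ≤ k) :
    ∃ (v : ZMod n → ℝ × ℝ) (E : Finset (Sym2 (ZMod n))),
      ConvexCyclic v ∧ (∀ e ∈ E, ¬ e.IsDiag) ∧
      E.card = k * n ∧
      NoDisjointEdges v E k ∧
      (∃ a : ZMod n, ∀ e ∈ E, ¬ ∀ x ∈ e, x ∈ arcFrom n a (n - 2 * k)) := by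
  have hn2 : 1 < n := by omega
  refine ⟨vm n, Ef n m k,
    ⟨vm_inj, vm_not_mem_hull, fun i => vm_edge_frontier hn2 i⟩,
    Ef_not_diag hn hm hk, Ef_card hn hm hk, ?_, ?_⟩
  · -- NoDisjointEdges
    intro hcon
    obtain ⟨S, hSE, hScard, hSpair⟩ := hcon
    -- pairwise segment disjointness
    have K0 : ∀ e ∈ S, ∀ f ∈ S, e ≠ f →
        Disjoint (segOf (vm n) e) (segOf (vm n) f) := by
      intro e he f hf hne
      exact hSpair (Finset.mem_coe.mpr he) (Finset.mem_coe.mpr hf) hne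
    -- no shared vertex
    have K1 : ∀ e ∈ S, ∀ f ∈ S, e ≠ f → ∀ c : ZMod n, c ∈ e → c ∈ f → False := by
      intro e he f hf hne c hce hcf
      exact Set.disjoint_left.mp (K0 e he f hf hne) (mem_segOf hce) (mem_segOf hcf)
    -- vals pairwise distinct across distinct edges
    have K1' : ∀ e ∈ S, ∀ f ∈ S, e ≠ f → ∀ c : ℕ,
        (c = (pr e).1 ∨ c = (pr e).2) → (c = (pr f).1 ∨ c = (pr f).2) → False := by
      intro e he f hf hne c hc1 hc2
      apply K1 e he f hf hne ((c : ℕ) : ZMod n)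
      · rcases hc1 with rfl | rfl
        · exact (pr_mem e).1
        · exact (pr_mem e).2
      · rcases hc2 with rfl | rfl
        · exact (pr_mem f).1
        · exact (pr_mem f).2
    -- no interleaving
    have K2 : ∀ e ∈ S, ∀ f ∈ S, e ≠ f →
        ¬ ((pr e).1 < (pr f).1 ∧ (pr f).1 < (pr e).2 ∧ (pr e).2 < (pr f).2) := by
      intro e he f hf hne hint
      apply vm_cross hint.1 hint.2.1 hint.2.2 (pr_lt_n f)
      have h1 := seg_pr (n := n) e
      have h2 := seg_pr (n := n) f
      rw [← h1, ← h2]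
      exact K0 e he f hf hne
    -- split S
    set S1 := S ∩ E1f n m with hS1
    set S2 := S ∩ E2f n m k with hS2
    have hsplit : S = S1 ∪ S2 := by
      rw [hS1, hS2, ← Finset.inter_union_distrib_left]
      rw [show E1f n m ∪ E2f n m k = Ef n m k from rfl]
      exact (Finset.inter_eq_left.mpr hSE).symm
    have hS12 : Disjoint S1 S2 :=
      Finset.disjoint_of_subset_left Finset.inter_subset_right
        (Finset.disjoint_of_subset_right Finset.inter_subset_right
          (E1f_E2f_disjoint hn hm hk))
    -- SDR for S1
    set T := S1.image pr with hT
    have hTmem : ∀ p ∈ T, ∃ e ∈ S1, pr e = p := by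
      intro p hp
      rw [hT, Finset.mem_image] at hp
      obtain ⟨e, he, rfl⟩ := hp
      exact ⟨e, he, rfl⟩
    have hS1mem : ∀ e ∈ S1, e ∈ S ∧ e ∈ E1f n m := by
      intro e he; rw [hS1, Finset.mem_inter] at he; exact he
    have hprinj : Set.InjOn pr (S1 : Set (Sym2 (ZMod n))) := by
      intro e he f hf hpef
      rw [Finset.mem_coe] at he hf
      by_contra hne
      exact K1' e (hS1mem e he).1 f (hS1mem f hf).1 hne (pr e).1 (Or.inl rfl)
        (by rw [hpef]; exact Or.inl rfl)
    obtain ⟨φ, hφinj, hφ⟩ := sdr_lemma T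
      (by
        intro p hp
        obtain ⟨e, he, rfl⟩ := hTmem p hp
        exact (mem_E1f hn hm hk (hS1mem e he).2).2)
      (by
        intro p hp q hq hpq
        obtain ⟨e, he, rfl⟩ := hTmem p hp
        obtain ⟨f, hf, rfl⟩ := hTmem q hq
        have hne : e ≠ f := fun h => hpq (by rw [h])
        refine ⟨?_, ?_, ?_, ?_⟩ <;> intro hcc
        · exact K1' e (hS1mem e he).1 f (hS1mem f hf).1 hne (pr e).1 (Or.inl rfl)
            (Or.inl hcc)
        · exact K1' e (hS1mem e he).1 f (hS1mem f hf).1 hne (pr e).1 (Or.inl rfl)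
            (Or.inr hcc)
        · exact K1' e (hS1mem e he).1 f (hS1mem f hf).1 hne (pr e).2 (Or.inr rfl)
            (Or.inl hcc)
        · exact K1' e (hS1mem e he).1 f (hS1mem f hf).1 hne (pr e).2 (Or.inr rfl)
            (Or.inr hcc))
      (by
        intro p hp q hq
        obtain ⟨e, he, rfl⟩ := hTmem p hp
        obtain ⟨f, hf, rfl⟩ := hTmem q hq
        rcases eq_or_ne e f with rfl | hne
        · intro hcc; omega
        · exact K2 e (hS1mem e he).1 f (hS1mem f hf).1 hne)
    -- the injection into the k even hubs
    set Devens : Finset ℕ := (Finset.range k).image (fun j => 2*m + 2*j) with hDe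
    have hDecard : Devens.card = k := by
      rw [hDe, Finset.card_image_of_injective _ (fun a b h => by omega), Finset.card_range]
    set F : Sym2 (ZMod n) → ℕ := fun e =>
      @ite _ (e ∈ E1f n m) (Classical.propDecidable _) (φ (pr e)) ((pr e).2) with hF
    have hFpos : ∀ e, e ∈ E1f n m → F e = φ (pr e) := fun e h => if_pos h
    have hFneg : ∀ e, e ∉ E1f n m → F e = (pr e).2 := fun e h => if_neg h
    have hS2pr : ∀ e ∈ S2, ∃ a j, a < 2*m-1 ∧ j < k ∧ pr e = (a, 2*m+2*j) := by
      intro e he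
      rw [hS2, Finset.mem_inter] at he
      exact mem_E2f hn hm hk he.2
    have hFmem : ∀ e ∈ S, F e ∈ Devens := by
      intro e he
      by_cases he1 : e ∈ E1f n m
      · rw [hFpos e he1]
        have hT' : pr e ∈ T := by
          rw [hT]; exact Finset.mem_image_of_mem pr (by rw [hS1, Finset.mem_inter]; exact ⟨he, he1⟩)
        obtain ⟨hev, hicc⟩ := hφ (pr e) hT'
        rw [Finset.mem_Icc] at hicc
        have hb1 : 2*m-1 ≤ (pr e).1 := (mem_E1f hn hm hk he1).1
        have hb2 : (pr e).2 < n := pr_lt_n e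
        obtain ⟨r, hr⟩ := hev
        rw [hDe, Finset.mem_image]
        exact ⟨r - m, Finset.mem_range.mpr (by omega), by omega⟩
      · rw [hFneg e he1]
        have he2 : e ∈ S2 := by
          rw [hS2, Finset.mem_inter]
          refine ⟨he, ?_⟩
          have := hSE he
          rw [Ef, Finset.mem_union] at this
          tauto
        obtain ⟨a, j, ha, hj, hpr⟩ := hS2pr e he2
        rw [hDe, Finset.mem_image]
        exact ⟨j, Finset.mem_range.mpr hj, by rw [hpr]⟩
    have hFinj : Set.InjOn F S := by
      intro e he f hf hFef
      rw [Finset.mem_coe] at he hf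
      by_contra hne
      by_cases he1 : e ∈ E1f n m <;> by_cases hf1 : f ∈ E1f n m
      · rw [hFpos e he1, hFpos f hf1] at hFef
        have hTe : pr e ∈ T := by
          rw [hT]; exact Finset.mem_image_of_mem pr (by rw [hS1, Finset.mem_inter]; exact ⟨he, he1⟩)
        have hTf : pr f ∈ T := by
          rw [hT]; exact Finset.mem_image_of_mem pr (by rw [hS1, Finset.mem_inter]; exact ⟨hf, hf1⟩)
        have := hφinj (Finset.mem_coe.mpr hTe) (Finset.mem_coe.mpr hTf) hFef
        exact K1' e he f hf hne (pr e).1 (Or.inl rfl) (by rw [this]; exact Or.inl rfl)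
      · -- e ∈ E1, f ∈ E2
        rw [hFpos e he1, hFneg f hf1] at hFef
        have hf2 : f ∈ S2 := by
          rw [hS2, Finset.mem_inter]
          refine ⟨hf, ?_⟩
          have := hSE hf
          rw [Ef, Finset.mem_union] at this
          tauto
        obtain ⟨a, j, ha, hj, hprf⟩ := hS2pr f hf2
        have hTe : pr e ∈ T := by
          rw [hT]; exact Finset.mem_image_of_mem pr (by rw [hS1, Finset.mem_inter]; exact ⟨he, he1⟩)
        obtain ⟨hev, hicc⟩ := hφ (pr e) hTe
        rw [Finset.mem_Icc] at hicc
        rw [hFef] at hicc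
        have hb1 : 2*m-1 ≤ (pr e).1 := (mem_E1f hn hm hk he1).1
        rcases hicc.1.lt_or_eq with hlt1 | heq1
        · rcases hicc.2.lt_or_eq with hlt2 | heq2
          · -- strict interleave : f = (a, d), e = (u, v), u < d < v, a < u
            have h5 : (pr f).1 = a := by rw [hprf]
            exact K2 f hf e he (Ne.symm hne) ⟨by omega, hlt1, hlt2⟩
          · exact K1' e he f hf hne (pr e).2 (Or.inr rfl) (by rw [heq2]; exact Or.inr rfl)
        · exact K1' e he f hf hne (pr e).1 (Or.inl rfl) (by rw [heq1]; exact Or.inr rfl)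
      · -- e ∈ E2, f ∈ E1 : symmetric
        rw [hFneg e he1, hFpos f hf1] at hFef
        have he2 : e ∈ S2 := by
          rw [hS2, Finset.mem_inter]
          refine ⟨he, ?_⟩
          have := hSE he
          rw [Ef, Finset.mem_union] at this
          tauto
        obtain ⟨a, j, ha, hj, hpre⟩ := hS2pr e he2
        have hTf : pr f ∈ T := by
          rw [hT]; exact Finset.mem_image_of_mem pr (by rw [hS1, Finset.mem_inter]; exact ⟨hf, hf1⟩)
        obtain ⟨hev, hicc⟩ := hφ (pr f) hTf
        rw [Finset.mem_Icc] at hicc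
        rw [← hFef] at hicc
        have hb1 : 2*m-1 ≤ (pr f).1 := (mem_E1f hn hm hk hf1).1
        rcases hicc.1.lt_or_eq with hlt1 | heq1
        · rcases hicc.2.lt_or_eq with hlt2 | heq2
          · have h5 : (pr e).1 = a := by rw [hpre]
            exact K2 e he f hf hne ⟨by omega, hlt1, hlt2⟩
          · exact K1' e he f hf hne (pr e).2 (Or.inr rfl) (by rw [heq2]; exact Or.inr rfl)
        · exact K1' e he f hf hne (pr e).2 (Or.inr rfl) (by rw [← heq1]; exact Or.inl rfl)
      · -- both E2
        rw [hFneg e he1, hFneg f hf1] at hFef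
        exact K1' e he f hf hne (pr e).2 (Or.inr rfl) (by rw [hFef]; exact Or.inr rfl)
    have hcard := Finset.card_le_card_of_injOn F hFmem hFinj
    rw [hScard, hDecard] at hcard
    omega
  · -- free arc
    refine ⟨0, ?_⟩
    intro e he hall
    have h2m : 2*m ≤ (pr e).2 := by
      rw [Ef, Finset.mem_union] at he
      rcases he with he | he
      · have := mem_E1f hn hm hk he
        omega
      · obtain ⟨a, j, ha, hj, hpr⟩ := mem_E2f hn hm hk he
        rw [hpr]
        omega
    have hx := hall _ (pr_mem e).2
    obtain ⟨i, hi, hieq⟩ := Finset.mem_image.mp hx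
    simp at hi
    obtain ⟨a, haq, haeq⟩ := hi
    rw [zero_add] at hieq
    have h5 : ((a:ℕ) : ZMod n) = (((pr e).2 : ℕ) : ZMod n) := by rw [haeq, hieq]
    have h6 := congrArg ZMod.val h5
    rw [ZMod.val_cast_of_lt (by omega), ZMod.val_cast_of_lt (pr_lt_n e)] at h6
    omega
end

section
/- Let n, k, q be natural numbers with 1 ≤ k ≤ ⌊n/2⌋ − 1 and q = n − 2k + ℓ with 0 < ℓ < k. Then any convex geometric graph on n vertices that contains no k+1 pairwise disjoint edges and admits an independent set of q consecutive boundary vertices has at most k·n − ℓ(ℓ+1)/2 edges. -/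
open scoped Classical

/-- orientation determinant -/
def orr (p q r : ℝ × ℝ) : ℝ := (q.1 - p.1) * (r.2 - p.2) - (q.2 - p.2) * (r.1 - p.1)

lemma orr_cyc (p q r : ℝ × ℝ) : orr p q r = orr q r p := by unfold orr; ring

lemma orr_swap (p q r : ℝ × ℝ) : orr p q r = - orr p r q := by unfold orr; ring

/-- four point identity -/
lemma orr_four (A B C D : ℝ × ℝ) :
    orr B C D - orr A C D + orr A B D - orr A B C = 0 := by unfold orr; ring

/-- barycentric identity (to be sign-checked) -/
lemma orr_bary (A B C D : ℝ × ℝ) :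
    (orr A C D) • B + (orr B A D) • C + (orr B C A) • D = (orr B C D) • A := by
  unfold orr
  apply Prod.ext <;> simp [Prod.smul_fst, Prod.smul_snd] <;> ring

lemma det_zero_parallel {u w : ℝ × ℝ} (hu : u ≠ 0) (h : u.1 * w.2 - u.2 * w.1 = 0) :
    ∃ t : ℝ, w = t • u := by
  rcases eq_or_ne u.1 0 with h1 | h1
  · have h2 : u.2 ≠ 0 := by
      intro h2; exact hu (Prod.ext h1 h2)
    refine ⟨w.2 / u.2, ?_⟩
    have hw1 : w.1 = 0 := by
      have := h; rw [h1] at this; simp at this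
      rcases this with h' | h' <;> simp_all
    apply Prod.ext <;> simp [Prod.smul_fst, Prod.smul_snd, h1, hw1]
    field_simp
  · refine ⟨w.1 / u.1, ?_⟩
    apply Prod.ext <;> simp [Prod.smul_fst, Prod.smul_snd]
    · field_simp
    · field_simp
      nlinarith [h]

/-- for three distinct collinear points, one is in the segment of the other two -/
lemma collinear_mem_segment {p q r : ℝ × ℝ} (hpq : p ≠ q) (hpr : p ≠ r) (hqr : q ≠ r)
    (h : orr p q r = 0) :
    r ∈ segment ℝ p q ∨ q ∈ segment ℝ p r ∨ p ∈ segment ℝ q r := by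
  have hu : q - p ≠ 0 := sub_ne_zero.2 (Ne.symm hpq)
  obtain ⟨t, ht⟩ : ∃ t : ℝ, r - p = t • (q - p) := by
    apply det_zero_parallel hu
    unfold orr at h
    simp only [Prod.fst_sub, Prod.snd_sub]
    nlinarith [h]
  have ht' : r = p + t • (q - p) := by rw [← ht]; abel
  rcases le_or_gt t 0 with h0 | h0
  · -- p between q and r : p = (t/(t-1)) q + (-1/(t-1)) r  ... p = (1/(1-t)) r + (-t/(1-t)) q
    right; right
    have h1 : (1:ℝ) - t > 0 := by linarith
    refine ⟨-t / (1 - t), 1 / (1 - t), div_nonneg (by linarith) (by linarith), by positivity, by field_simp; ring, ?_⟩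
    rw [ht']
    apply Prod.ext <;> simp [Prod.smul_fst, Prod.smul_snd] <;> field_simp <;> ring
  rcases le_or_gt t 1 with h1 | h1
  · left
    exact ⟨1 - t, t, by linarith, by linarith, by ring, by rw [ht']; apply Prod.ext <;>
      simp [Prod.smul_fst, Prod.smul_snd] <;> ring⟩
  · right; left
    refine ⟨1 - 1/t, 1/t, by
        have : 1/t ≤ 1 := by rw [div_le_one] <;> linarith
        linarith, by positivity, by ring, ?_⟩
    rw [ht']
    apply Prod.ext <;> simp [Prod.smul_fst, Prod.smul_snd] <;> field_simp <;> ring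


section Geo
variable {n : ℕ} [NeZero n] {v : ZMod n → ℝ × ℝ}

lemma not_mem_seg (hv : ConvexCyclic v) {a b m : ZMod n} (ha : a ≠ m) (hb : b ≠ m) :
    v m ∉ segment ℝ (v a) (v b) := by
  intro hmem
  apply hv.2.1 m
  have heq : segment ℝ (v a) (v b) = convexHull ℝ {v a, v b} := (convexHull_pair (v a) (v b)).symm
  rw [heq] at hmem
  refine convexHull_mono ?_ hmem
  rintro z (rfl | rfl)
  · exact ⟨a, ha, rfl⟩
  · exact ⟨b, hb, rfl⟩

lemma orr_ne (hv : ConvexCyclic v) {x y z : ZMod n} (hxy : x ≠ y) (hxz : x ≠ z)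
    (hyz : y ≠ z) : orr (v x) (v y) (v z) ≠ 0 := by
  intro h
  have hpq : v x ≠ v y := fun hc => hxy (hv.1 hc)
  have hpr : v x ≠ v z := fun hc => hxz (hv.1 hc)
  have hqr : v y ≠ v z := fun hc => hyz (hv.1 hc)
  rcases collinear_mem_segment hpq hpr hqr h with h' | h' | h'
  · exact not_mem_seg hv hxz hyz h'
  · exact not_mem_seg hv hxy (Ne.symm hyz) h'
  · exact not_mem_seg hv (Ne.symm hxy) (Ne.symm hxz) h'

end Geo

section Geo
variable {n : ℕ} [NeZero n] {v : ZMod n → ℝ × ℝ}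

lemma span_top {p0 p1 p2 : ℝ × ℝ} (h : orr p0 p1 p2 ≠ 0) {s : Set (ℝ × ℝ)}
    (h0 : p0 ∈ s) (h1 : p1 ∈ s) (h2 : p2 ∈ s) : affineSpan ℝ s = ⊤ := by
  rw [eq_top_iff]
  intro pt _
  have hmem : pt - p0 ∈ vectorSpan ℝ s := by
    set u : ℝ × ℝ := p1 - p0 with hu
    set u' : ℝ × ℝ := p2 - p0 with hu'
    have hD : u.1 * u'.2 - u.2 * u'.1 ≠ 0 := by
      unfold orr at h
      simpa [hu, hu', Prod.fst_sub, Prod.snd_sub] using h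
    have hum : u ∈ vectorSpan ℝ s := vsub_mem_vectorSpan ℝ h1 h0
    have hum' : u' ∈ vectorSpan ℝ s := vsub_mem_vectorSpan ℝ h2 h0
    set D := u.1 * u'.2 - u.2 * u'.1
    set w : ℝ × ℝ := pt - p0
    have key : w = ((w.1 * u'.2 - w.2 * u'.1) / D) • u + ((u.1 * w.2 - u.2 * w.1) / D) • u' := by
      apply Prod.ext <;> simp [Prod.smul_fst, Prod.smul_snd] <;> field_simp <;> ring
    rw [key]
    exact Submodule.add_mem _ (Submodule.smul_mem _ _ hum) (Submodule.smul_mem _ _ hum')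
  have : pt = (pt - p0) +ᵥ p0 := by simp
  rw [this]
  apply AffineSubspace.vadd_mem_of_mem_direction
  · rw [direction_affineSpan]; exact hmem
  · exact subset_affineSpan ℝ s h0
end Geo

lemma orr_factor {p q : ℝ × ℝ} (hpq : q - p ≠ 0) {f : (ℝ × ℝ) →L[ℝ] ℝ}
    (hfq : f q = f p) (hne : ∃ x : ℝ × ℝ, f x ≠ f p) :
    ∃ cc : ℝ, cc ≠ 0 ∧ ∀ w : ℝ × ℝ, orr p q w = cc * (f w - f p) := by
  set a : ℝ := f (1, 0) with ha
  set b : ℝ := f (0, 1) with hb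
  have hfw : ∀ w : ℝ × ℝ, f w = a * w.1 + b * w.2 := by
    intro w
    have hw : w = w.1 • ((1, 0) : ℝ × ℝ) + w.2 • ((0, 1) : ℝ × ℝ) := by
      apply Prod.ext <;> simp
    rw [hw, map_add, map_smul, map_smul]
    simp [ha, hb]
    ring
  have hab : a ≠ 0 ∨ b ≠ 0 := by
    by_contra hc
    push_neg at hc
    obtain ⟨x, hx⟩ := hne
    apply hx
    rw [hfw x, hfw p, hc.1, hc.2]; ring
  set u : ℝ × ℝ := q - p with hu
  have key : a * u.1 + b * u.2 = 0 := by
    have := hfq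
    rw [hfw q, hfw p] at this
    simp [hu, Prod.fst_sub, Prod.snd_sub]
    linarith [this]
  have horr : ∀ w : ℝ × ℝ, orr p q w = u.1 * (w.2 - p.2) - u.2 * (w.1 - p.1) := by
    intro w; unfold orr; simp [hu, Prod.fst_sub, Prod.snd_sub]
  rcases eq_or_ne b 0 with hb0 | hb0
  · have ha0 : a ≠ 0 := hab.resolve_right (by simp [hb0])
    have hu1 : u.1 = 0 := by
      have : a * u.1 = 0 := by rw [hb0] at key; linarith
      exact (mul_eq_zero.1 this).resolve_left ha0
    have hu2 : u.2 ≠ 0 := by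
      intro hc; exact hpq (by apply Prod.ext <;> simp [hu1, hc] <;> simp [hu] at hu1 hc ⊢ <;> linarith)
    refine ⟨-u.2 / a, by simp [hu2, ha0], fun w => ?_⟩
    rw [horr, hfw w, hfw p]
    field_simp
    rw [hb0, hu1]
    ring
  · have hcc : u.1 ≠ 0 := by
      intro hc
      have : b * u.2 = 0 := by rw [hc] at key; linarith
      have hu2 : u.2 = 0 := (mul_eq_zero.1 this).resolve_left hb0
      exact hpq (by simp [hu, Prod.ext_iff, Prod.fst_sub, Prod.snd_sub] at hc hu2 ⊢ ; constructor <;> linarith)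
    refine ⟨u.1 / b, by simp [hcc, hb0], fun w => ?_⟩
    rw [horr, hfw w, hfw p]
    field_simp
    linear_combination (p.1 - w.1) * key

section Geo2
variable {n : ℕ} [NeZero n] {v : ZMod n → ℝ × ℝ}

lemma zmod_cast_ne {a b : ℕ} (ha : a < n) (hb : b < n) (hab : a ≠ b) :
    (a : ZMod n) ≠ (b : ZMod n) := by
  intro h
  apply hab
  have := congrArg ZMod.val h
  rwa [ZMod.val_cast_of_lt ha, ZMod.val_cast_of_lt hb] at this

lemma supp_edge (hv : ConvexCyclic v) (hn : 3 ≤ n) (i : ZMod n) {z w : ZMod n}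
    (hz1 : z ≠ i) (hz2 : z ≠ i + 1) (hw1 : w ≠ i) (hw2 : w ≠ i + 1) :
    0 < orr (v i) (v (i + 1)) (v z) * orr (v i) (v (i + 1)) (v w) := by
  set K := convexHull ℝ (Set.range v) with hK
  have hKc : Convex ℝ K := convex_convexHull ℝ _
  -- interior nonempty
  have d01 : ((0 : ℕ) : ZMod n) ≠ ((1 : ℕ) : ZMod n) := zmod_cast_ne (by omega) (by omega) (by omega)
  have d02 : ((0 : ℕ) : ZMod n) ≠ ((2 : ℕ) : ZMod n) := zmod_cast_ne (by omega) (by omega) (by omega)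
  have d12 : ((1 : ℕ) : ZMod n) ≠ ((2 : ℕ) : ZMod n) := zmod_cast_ne (by omega) (by omega) (by omega)
  have hint : (interior K).Nonempty := by
    rw [hK, interior_convexHull_nonempty_iff_affineSpan_eq_top]
    exact span_top (orr_ne hv d01 d02 d12) ⟨_, rfl⟩ ⟨_, rfl⟩ ⟨_, rfl⟩
  set m := midpoint ℝ (v i) (v (i + 1)) with hm
  have hmf : m ∈ frontier K := hv.2.2 i (midpoint_mem_segment _ _)
  have hmni : m ∉ interior K := hmf.2
  obtain ⟨f, hf⟩ := geometric_hahn_banach_open_point hKc.interior isOpen_interior hmni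
  obtain ⟨c, hc⟩ := hint
  have hfc : f c < f m := hf c hc
  -- all of K is below f m
  have hle : ∀ y ∈ K, f y ≤ f m := by
    intro y hy
    by_contra hgt
    push_neg at hgt
    set t : ℝ := (f m - f c) / (f y - f c) with htdef
    have hd : 0 < f y - f c := by linarith
    have ht0 : 0 < t := div_pos (by linarith) hd
    have ht1 : t < 1 := by
      rw [htdef, div_lt_one hd]; linarith
    have hmem : (1 - t) • c + t • y ∈ interior K :=
      hKc.combo_interior_closure_mem_interior hc (subset_closure hy) (by linarith) (by linarith)
        (by ring)
    have := hf _ hmem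
    rw [map_add, map_smul, map_smul] at this
    have hfx : (1 - t) * f c + t * f y = f m := by
      rw [htdef]
      field_simp
      ring
    simp only [smul_eq_mul] at this
    linarith
  have hfvi : f (v i) = f m ∧ f (v (i + 1)) = f m := by
    have h1 : f (v i) ≤ f m := hle _ (subset_convexHull ℝ _ ⟨_, rfl⟩)
    have h2 : f (v (i + 1)) ≤ f m := hle _ (subset_convexHull ℝ _ ⟨_, rfl⟩)
    have h3 : f m = (f (v i) + f (v (i + 1))) / 2 := by
      rw [hm, midpoint_eq_smul_add, map_smul]
      simp [map_add]
      ring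
    constructor <;> linarith
  have h10 : (1 : ZMod n) ≠ 0 := by
    have := zmod_cast_ne (n := n) (a := 1) (b := 0) (by omega) (by omega) (by omega)
    simpa using this
  have hine : i ≠ i + 1 := by
    intro hc'
    apply h10
    have := congrArg (fun t => t - i) hc'
    simpa using this.symm
  have hii1 : v (i + 1) - v i ≠ 0 := by
    intro hc'
    exact hine (hv.1 (sub_eq_zero.1 hc')).symm
  obtain ⟨cc, hcc0, hccw⟩ := orr_factor hii1 (by rw [hfvi.1, hfvi.2]) ⟨c, by rw [hfvi.1]; exact ne_of_lt hfc⟩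
  have hstrict : ∀ x : ZMod n, x ≠ i → x ≠ i + 1 → f (v x) - f (v i) < 0 := by
    intro x hx1 hx2
    have h1 : f (v x) ≤ f m := hle _ (subset_convexHull ℝ _ ⟨_, rfl⟩)
    rcases lt_or_eq_of_le h1 with h | h
    · rw [hfvi.1]; linarith
    · exfalso
      have : orr (v i) (v (i + 1)) (v x) = 0 := by
        rw [hccw, hfvi.1, h]; ring
      exact orr_ne hv hine (Ne.symm hx1) (Ne.symm hx2) this
  have hz := hstrict z hz1 hz2
  have hw := hstrict w hw1 hw2
  rw [hccw (v z), hccw (v w)]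
  have h1 : 0 < (f (v i) - f (v z)) * (f (v i) - f (v w)) := mul_pos (by linarith) (by linarith)
  have h2 : cc * (f (v z) - f (v i)) * (cc * (f (v w) - f (v i))) =
      cc * cc * ((f (v i) - f (v z)) * (f (v i) - f (v w))) := by ring
  rw [h2]
  exact mul_pos (mul_self_pos.2 hcc0) h1
end Geo2
lemma orr_swap12 (p q r : ℝ × ℝ) : orr p q r = - orr q p r := by unfold orr; ring

lemma pos_cancel {e a b : ℝ} (he : e ≠ 0) (h1 : 0 < e * a) (h2 : 0 < e * b) : 0 < a * b := by
  by_contra h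
  push_neg at h
  nlinarith [mul_pos h1 h2, mul_self_pos.2 he]

lemma pos_cancel' {e a b : ℝ} (h1 : 0 < e * a) (h2 : 0 < a * b) : 0 < e * b := by
  have ha : a ≠ 0 := by rintro rfl; simp at h2
  by_contra h
  push_neg at h
  nlinarith [mul_pos h1 h2, mul_self_pos.2 ha]

lemma bary {A B C D : ℝ × ℝ} (h1 : 0 < orr B C D * orr A C D)
    (h2 : 0 < orr B C D * orr B A D) (h3 : 0 < orr B C D * orr B C A) :
    A ∈ convexHull ℝ ({B, C, D} : Set (ℝ × ℝ)) := by
  set S := orr B C D with hS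
  set wB := orr A C D with hwB
  set wC := orr B A D with hwC
  set wD := orr B C A with hwD
  have hS0 : S ≠ 0 := by rintro h; rw [h] at h1; simp at h1
  have hsum : wB + wC + wD = S := by
    have h4 := orr_four A B C D
    have e1 : orr B A D = - orr A B D := orr_swap12 B A D
    have e2 : orr B C A = orr A B C := by rw [orr_cyc A B C]
    rw [hwB, hwC, hwD, hS, e1, e2]
    linarith [h4]
  set lB := wB / S with hlB
  set lC := wC / S with hlC
  set lD := wD / S with hlD
  have hlBp : 0 < lB := by
    rcases lt_or_gt_of_ne hS0 with h | h
    · exact div_pos_of_neg_of_neg (by nlinarith) h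
    · apply div_pos (by nlinarith) h
  have hlCp : 0 < lC := by
    rcases lt_or_gt_of_ne hS0 with h | h
    · exact div_pos_of_neg_of_neg (by nlinarith) h
    · apply div_pos (by nlinarith) h
  have hlDp : 0 < lD := by
    rcases lt_or_gt_of_ne hS0 with h | h
    · exact div_pos_of_neg_of_neg (by nlinarith) h
    · apply div_pos (by nlinarith) h
  have hlsum : lB + lC + lD = 1 := by
    rw [hlB, hlC, hlD, ← add_div, ← add_div, hsum, div_self hS0]
  have hA : A = lB • B + lC • C + lD • D := by
    have hb := orr_bary A B C D
    rw [← hwB, ← hwC, ← hwD, ← hS] at hb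
    have : A = S⁻¹ • (S • A) := (inv_smul_smul₀ hS0 A).symm
    rw [this, ← hb, smul_add, smul_add, smul_smul, smul_smul, smul_smul]
    rw [hlB, hlC, hlD]
    congr 1 <;> [skip; rw [div_eq_inv_mul]]
    congr 1 <;> rw [div_eq_inv_mul]
  -- combine
  have hCD : (lC / (lC + lD)) • C + (lD / (lC + lD)) • D ∈ convexHull ℝ ({B, C, D} : Set (ℝ × ℝ)) := by
    apply convexHull_mono (show ({C, D} : Set (ℝ × ℝ)) ⊆ {B, C, D} by intro x hx; right; exact hx)
    rw [convexHull_pair]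
    exact ⟨lC / (lC + lD), lD / (lC + lD), by positivity, by positivity,
      by field_simp, rfl⟩
  have hB : B ∈ convexHull ℝ ({B, C, D} : Set (ℝ × ℝ)) := subset_convexHull ℝ _ (by left; rfl)
  have hne : lC + lD ≠ 0 := by positivity
  have := (convex_convexHull ℝ ({B, C, D} : Set (ℝ × ℝ))) hB hCD (le_of_lt hlBp)
    (le_of_lt (by positivity : (0:ℝ) < lC + lD)) (show lB + (lC + lD) = 1 by linarith)
  convert this using 1
  have e3 : (lC + lD) * (lC / (lC + lD)) = lC := by field_simp
  have e4 : (lC + lD) * (lD / (lC + lD)) = lD := by field_simp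
  rw [hA, smul_add, smul_smul, smul_smul, e3, e4]
  abel

section Geo3
variable {n : ℕ} [NeZero n] {v : ZMod n → ℝ × ℝ}

lemma zmod_natCast_ne_zero {a : ℕ} (h0 : 0 < a) (hn : a < n) : (a : ZMod n) ≠ 0 := by
  intro h
  have := congrArg ZMod.val h
  rw [ZMod.val_cast_of_lt hn] at this
  simp at this
  omega

lemma zmod_add_nat_ne {x : ZMod n} {a : ℕ} (h0 : 0 < a) (ha : a < n) :
    x + (a : ZMod n) ≠ x := by
  intro h
  apply zmod_natCast_ne_zero h0 ha
  have := congrArg (fun t => t - x) h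
  simpa [add_comm] using this

lemma zmod_add_ne {x : ZMod n} {a b : ℕ} (ha : a < n) (hb : b < n) (hab : a ≠ b) :
    x + (a : ZMod n) ≠ x + (b : ZMod n) := by
  intro h
  have h2 : (a : ZMod n) = (b : ZMod n) := by
    have := congrArg (fun t => t - x) h
    simpa using this
  exact zmod_cast_ne ha hb hab h2

lemma supp_global (hv : ConvexCyclic v) (hn : 3 ≤ n) :
    ∀ (i z : ZMod n), z ≠ i → z ≠ i + 1 →
      0 < orr (v 0) (v 1) (v 2) * orr (v i) (v (i + 1)) (v z) := by
  have h2a : (2 : ZMod n) ≠ 0 := by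
    have := zmod_natCast_ne_zero (n := n) (a := 2) (by omega) (by omega)
    simpa using this
  have h2b : (2 : ZMod n) ≠ 1 := by
    have := zmod_cast_ne (n := n) (a := 2) (b := 1) (by omega) (by omega) (by omega)
    simpa using this
  have h1a : (1 : ZMod n) ≠ 0 := by
    have := zmod_natCast_ne_zero (n := n) (a := 1) (by omega) (by omega)
    simpa using this
  have key : ∀ m : ℕ, ∀ z : ZMod n, z ≠ (m : ZMod n) → z ≠ (m : ZMod n) + 1 →
      0 < orr (v 0) (v 1) (v 2) * orr (v (m : ZMod n)) (v ((m : ZMod n) + 1)) (v z) := by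
    intro m
    induction m with
    | zero =>
      intro z hz1 hz2
      simp only [Nat.cast_zero] at hz1 hz2 ⊢
      have e01 : (0 : ZMod n) + 1 = 1 := zero_add 1
      have hA := supp_edge hv hn 0 (z := 2) (w := z)
        h2a (by rw [e01]; exact h2b) hz1 hz2
      rw [e01] at hA ⊢
      exact hA
    | succ m ih =>
      intro z hz1 hz2
      set M : ZMod n := (m : ZMod n) with hM
      have hc : ((m + 1 : ℕ) : ZMod n) = M + 1 := by push_cast; ring
      rw [hc] at hz1 hz2 ⊢
      have e2 : M + (2 : ZMod n) = M + 1 + 1 := by ring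
      have hM2ne : M + (2:ZMod n) ≠ M := by
        have := zmod_add_nat_ne (n := n) (x := M) (a := 2) (by omega) (by omega)
        simpa using this
      have hM2ne1 : M + (2:ZMod n) ≠ M + 1 := by
        have := zmod_add_ne (n := n) (x := M) (a := 2) (b := 1) (by omega) (by omega) (by omega)
        simpa using this
      have hB := ih (M + 2) hM2ne hM2ne1
      rw [e2] at hB
      have hB' : 0 < orr (v 0) (v 1) (v 2) * orr (v (M + 1)) (v (M + 1 + 1)) (v M) := by
        rw [← orr_cyc (v M) (v (M + 1)) (v (M + 1 + 1))]
        exact hB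
      have hMne1 : M ≠ M + 1 := by
        have := zmod_add_nat_ne (n := n) (x := M) (a := 1) (by omega) (by omega)
        simpa using this.symm
      have hMne2 : M ≠ M + 1 + 1 := by
        rw [← e2]
        have := zmod_add_nat_ne (n := n) (x := M) (a := 2) (by omega) (by omega)
        simpa using this.symm
      have hA := supp_edge hv hn (M + 1) (z := z) (w := M) hz1 hz2 hMne1 hMne2
      exact pos_cancel' hB' (by nlinarith [hA])
  intro i z hz1 hz2
  have hi : i = ((i.val : ℕ) : ZMod n) := (ZMod.natCast_zmod_val i).symm
  rw [hi] at hz1 hz2 ⊢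
  exact key i.val z hz1 hz2
end Geo3

section Geo4
variable {n : ℕ} [NeZero n] {v : ZMod n → ℝ × ℝ}

lemma seg_orr_zero {p q w : ℝ × ℝ} (h : w ∈ segment ℝ p q) : orr p w q = 0 := by
  obtain ⟨a, b, _, _, hab, rfl⟩ := h
  unfold orr
  simp only [Prod.fst_add, Prod.snd_add, Prod.smul_fst, Prod.smul_snd, smul_eq_mul]
  linear_combination (p.1 * (q.2 - p.2) - p.2 * (q.1 - p.1)) * hab

lemma seg_orr_pos {e : ℝ} {p q z1 z2 w : ℝ × ℝ} (h1 : 0 < e * orr p z1 q)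
    (h2 : 0 < e * orr p z2 q) (hw : w ∈ segment ℝ z1 z2) : 0 < e * orr p w q := by
  obtain ⟨a, b, ha, hb, hab, rfl⟩ := hw
  have hid : orr p (a • z1 + b • z2) q = a * orr p z1 q + b * orr p z2 q := by
    unfold orr
    simp only [Prod.fst_add, Prod.snd_add, Prod.smul_fst, Prod.smul_snd, smul_eq_mul]
    linear_combination (p.1 * (q.2 - p.2) - p.2 * (q.1 - p.1)) * hab
  rw [hid]
  rcases eq_or_lt_of_le ha with h | h
  · have hb1 : b = 1 := by linarith
    rw [← h, hb1]; simpa using h2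
  · nlinarith [mul_pos h h1, mul_nonneg hb h2.le]

lemma chain (hv : ConvexCyclic v) (hn : 3 ≤ n) :
    ∀ d : ℕ, d < n → ∀ (x : ZMod n) (j : ℕ), 0 < j → j < d →
      0 < orr (v 0) (v 1) (v 2) * orr (v x) (v (x + (j : ZMod n))) (v (x + (d : ZMod n))) := by
  intro d
  induction d using Nat.strong_induction_on with
  | _ d IH =>
    intro hdn x j hj0 hjd
    have hd2 : 2 ≤ d := by omega
    have hi1 : x + ((d - 1 : ℕ) : ZMod n) + 1 = x + (d : ZMod n) := by
      have : ((d - 1 : ℕ) : ZMod n) = (d : ZMod n) - 1 := by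
        push_cast [Nat.cast_sub (show 1 ≤ d by omega)]; ring
      rw [this]; ring
    have hxni : x ≠ x + ((d - 1 : ℕ) : ZMod n) :=
      (zmod_add_nat_ne (by omega) (by omega)).symm
    have hxnd : x ≠ x + (d : ZMod n) := (zmod_add_nat_ne (by omega) (by omega)).symm
    have hACD : 0 < orr (v 0) (v 1) (v 2) *
        orr (v x) (v (x + ((d - 1 : ℕ) : ZMod n))) (v (x + (d : ZMod n))) := by
      have h := supp_global hv hn (x + ((d - 1 : ℕ) : ZMod n)) x hxni (by rw [hi1]; exact hxnd)
      rw [hi1] at h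
      rw [orr_cyc (v x) (v (x + ((d - 1 : ℕ) : ZMod n))) (v (x + (d : ZMod n)))]
      exact h
    by_cases hjd1 : j = d - 1
    · rw [hjd1]; exact hACD
    · have hjd1' : j < d - 1 := by omega
      have hABC := IH (d - 1) (by omega) (by omega) x j hj0 hjd1'
      have hBCD : 0 < orr (v 0) (v 1) (v 2) *
          orr (v (x + (j : ZMod n))) (v (x + ((d - 1 : ℕ) : ZMod n))) (v (x + (d : ZMod n))) := by
        have h := supp_global hv hn (x + ((d - 1 : ℕ) : ZMod n)) (x + (j : ZMod n))
          (zmod_add_ne (by omega) (by omega) (by omega))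
          (by rw [hi1]; exact zmod_add_ne (by omega) (by omega) (by omega))
        rw [hi1] at h
        rw [orr_cyc (v (x + (j : ZMod n))) (v (x + ((d - 1 : ℕ) : ZMod n))) (v (x + (d : ZMod n)))]
        exact h
      have hεne : orr (v 0) (v 1) (v 2) ≠ 0 := by
        intro h; rw [h, zero_mul] at hACD; exact lt_irrefl 0 hACD
      rcases lt_trichotomy (orr (v 0) (v 1) (v 2) *
          orr (v x) (v (x + (j : ZMod n))) (v (x + (d : ZMod n)))) 0 with hneg | h0 | hpos
      · exfalso
        set A := v x
        set B := v (x + (j : ZMod n))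
        set C := v (x + ((d - 1 : ℕ) : ZMod n))
        set D := v (x + (d : ZMod n))
        have hBAD : 0 < orr (v 0) (v 1) (v 2) * orr B A D := by
          rw [orr_swap12 B A D]
          nlinarith [hneg]
        have hBCA : 0 < orr (v 0) (v 1) (v 2) * orr B C A := by
          rw [← orr_cyc A B C]
          exact hABC
        have hmem := bary (pos_cancel hεne hBCD hACD) (pos_cancel hεne hBCD hBAD)
          (pos_cancel hεne hBCD hBCA)
        apply hv.2.1 x
        refine convexHull_mono ?_ hmem
        rintro z (rfl | rfl | rfl)
        · exact ⟨_, (zmod_add_nat_ne (by omega) (by omega)), rfl⟩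
        · exact ⟨_, (zmod_add_nat_ne (by omega) (by omega)), rfl⟩
        · exact ⟨_, (zmod_add_nat_ne (by omega) (by omega)), rfl⟩
      · exfalso
        have : orr (v x) (v (x + (j : ZMod n))) (v (x + (d : ZMod n))) = 0 := by
          rcases mul_eq_zero.1 h0 with h | h
          · exact absurd h hεne
          · exact h
        exact orr_ne hv ((zmod_add_nat_ne (by omega) (by omega)).symm)
          hxnd (zmod_add_ne (by omega) (by omega) (by omega)) this
      · exact hpos

lemma chords_disjoint (hv : ConvexCyclic v) (hn : 3 ≤ n) (x : ZMod n) {j1 j2 d : ℕ}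
    (h1 : 0 < j1) (h12 : j1 < j2) (h2d : j2 < d) (hdn : d < n) :
    Disjoint (segment ℝ (v x) (v (x + (d : ZMod n))))
      (segment ℝ (v (x + (j1 : ZMod n))) (v (x + (j2 : ZMod n)))) := by
  rw [Set.disjoint_left]
  intro p hp1 hp2
  have hz : orr (v x) p (v (x + (d : ZMod n))) = 0 := seg_orr_zero hp1
  have hpos := seg_orr_pos (chain hv hn d hdn x j1 h1 (by omega))
    (chain hv hn d hdn x j2 (by omega) h2d) hp2
  rw [hz, mul_zero] at hpos
  exact lt_irrefl 0 hpos
end Geo4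

section Geo5
variable {n : ℕ} [NeZero n] {v : ZMod n → ℝ × ℝ}

lemma class_disjoint (hv : ConvexCyclic v) (hn : 3 ≤ n) {x y x' y' : ZMod n}
    (hsum : x + y = x' + y') (hxy : x ≠ y) (hxy' : x' ≠ y')
    (h1 : x' ≠ x) (h2 : x' ≠ y) (h3 : y' ≠ x) (h4 : y' ≠ y) :
    Disjoint (segment ℝ (v x) (v y)) (segment ℝ (v x') (v y')) := by
  set c := (x' - x).val with hc
  set c' := (y' - x).val with hc'
  set e := (y - x).val with he
  have hcn : c < n := ZMod.val_lt _
  have hcn' : c' < n := ZMod.val_lt _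
  have hen : e < n := ZMod.val_lt _
  have hc0 : 0 < c := ZMod.val_pos.2 (sub_ne_zero.2 h1)
  have hc0' : 0 < c' := ZMod.val_pos.2 (sub_ne_zero.2 h3)
  have he0 : 0 < e := ZMod.val_pos.2 (sub_ne_zero.2 hxy.symm)
  have hcc' : c ≠ c' := by
    intro h
    apply hxy'
    have : x' - x = y' - x := by
      rw [← ZMod.natCast_zmod_val (x' - x), ← ZMod.natCast_zmod_val (y' - x), ← hc, ← hc', h]
    have := congrArg (fun t => t + x) this
    simpa using this
  have hce : c ≠ e := by
    intro h
    apply h2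
    have : x' - x = y - x := by
      rw [← ZMod.natCast_zmod_val (x' - x), ← ZMod.natCast_zmod_val (y - x), ← hc, ← he, h]
    have := congrArg (fun t => t + x) this
    simpa using this
  have hc'e : c' ≠ e := by
    intro h
    apply h4
    have : y' - x = y - x := by
      rw [← ZMod.natCast_zmod_val (y' - x), ← ZMod.natCast_zmod_val (y - x), ← hc', ← he, h]
    have := congrArg (fun t => t + x) this
    simpa using this
  have hkey : (c + c') % n = e := by
    have hadd : (x' - x) + (y' - x) = y - x := by
      have : x' + y' = x + y := hsum.symm
      linear_combination this
    have := congrArg ZMod.val hadd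
    rwa [ZMod.val_add] at this
  have hxc : x + (c : ZMod n) = x' := by rw [hc, ZMod.natCast_zmod_val]; ring
  have hxc' : x + (c' : ZMod n) = y' := by rw [hc', ZMod.natCast_zmod_val]; ring
  have hxe : x + (e : ZMod n) = y := by rw [he, ZMod.natCast_zmod_val]; ring
  rcases lt_or_ge (c + c') n with hlt | hge
  · -- inner pair inside arc from x to y
    have hecc : e = c + c' := by rw [← hkey, Nat.mod_eq_of_lt hlt]
    have hd := chords_disjoint hv hn x (j1 := min c c') (j2 := max c c') (d := e)
      (by omega) (by omega) (by omega) hen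
    rw [hxe] at hd
    rcases le_total c c' with h | h
    · rw [min_eq_left h, max_eq_right h, hxc, hxc'] at hd
      exact hd
    · rw [min_eq_right h, max_eq_left h, hxc, hxc'] at hd
      rw [segment_symm ℝ (v y') (v x')] at hd
      exact hd
  · -- inner pair inside arc from y to x
    have hecc : c + c' = n + e := by
      have h2n : c + c' - n < n := by omega
      have : (c + c') % n = c + c' - n := by
        rw [Nat.mod_eq_sub_mod hge, Nat.mod_eq_of_lt h2n]
      omega
    have hcgt : e < c := by omega
    have hcgt' : e < c' := by omega
    have hyx : y + ((n - e : ℕ) : ZMod n) = x := by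
      push_cast [Nat.cast_sub hen.le]
      rw [ZMod.natCast_self, ← hxe]
      ring
    have hyc : y + ((c - e : ℕ) : ZMod n) = x' := by
      push_cast [Nat.cast_sub hcgt.le]
      rw [← hxc, ← hxe]
      ring
    have hyc' : y + ((c' - e : ℕ) : ZMod n) = y' := by
      push_cast [Nat.cast_sub hcgt'.le]
      rw [← hxc', ← hxe]
      ring
    have hd := chords_disjoint hv hn y (j1 := min (c - e) (c' - e)) (j2 := max (c - e) (c' - e))
      (d := n - e) (by omega) (by omega) (by omega) (by omega)
    rw [hyx] at hd
    rw [segment_symm ℝ (v x) (v y)]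
    rcases le_total c c' with h | h
    · rw [min_eq_left (by omega), max_eq_right (by omega), hyc, hyc'] at hd
      exact hd
    · rw [min_eq_right (by omega), max_eq_left (by omega), hyc, hyc'] at hd
      rw [segment_symm ℝ (v y') (v x')] at hd
      exact hd
end Geo5

noncomputable def eSum {n : ℕ} (e : Sym2 (ZMod n)) : ZMod n :=
  Sym2.lift ⟨fun i j => i + j, fun i j => add_comm i j⟩ e

@[simp] lemma eSum_mk {n : ℕ} (i j : ZMod n) : eSum s(i, j) = i + j := rfl

@[simp] lemma segOf_mk {n : ℕ} (v : ZMod n → ℝ × ℝ) (i j : ZMod n) :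
    segOf v s(i, j) = segment ℝ (v i) (v j) := rfl

lemma edge_eq_of_mem {n : ℕ} {e : Sym2 (ZMod n)} {s z : ZMod n}
    (hs : eSum e = s) (hz : z ∈ e) : e = s(z, s - z) := by
  induction e with
  | _ x y =>
    rw [eSum_mk] at hs
    rw [Sym2.mem_iff] at hz
    rcases hz with rfl | rfl
    · have : s - z = y := by rw [← hs]; ring
      rw [this]
    · have : s - z = x := by rw [← hs]; ring
      rw [this, Sym2.eq_swap]

lemma class_seg_disjoint {n : ℕ} [NeZero n] {v : ZMod n → ℝ × ℝ}
    (hv : ConvexCyclic v) (hn : 3 ≤ n) {e f : Sym2 (ZMod n)} {s : ZMod n}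
    (he : eSum e = s) (hf : eSum f = s) (hde : ¬e.IsDiag) (hdf : ¬f.IsDiag)
    (hne : e ≠ f) : Disjoint (segOf v e) (segOf v f) := by
  induction e with
  | _ x y =>
    induction f with
    | _ x' y' =>
      rw [eSum_mk] at he hf
      rw [Sym2.mk_isDiag_iff] at hde hdf
      rw [segOf_mk, segOf_mk]
      have hsum : x + y = x' + y' := by rw [he, hf]
      have hxx : x' ≠ x := by
        intro h
        rw [h] at hsum
        have hy : y = y' := add_left_cancel hsum
        exact hne (by rw [h, ← hy])
      have hyy : y' ≠ y := by
        intro h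
        rw [h] at hsum
        have hx : x = x' := add_right_cancel hsum
        exact hne (by rw [h, ← hx])
      have hxy2 : x' ≠ y := by
        intro h
        rw [h, add_comm y y'] at hsum
        have hx : x = y' := add_right_cancel hsum
        apply hne
        rw [h, ← hx]
        exact Sym2.eq_swap
      have hyx : y' ≠ x := by
        intro h
        rw [h, add_comm x' x] at hsum
        have hy : y = x' := add_left_cancel hsum
        apply hne
        rw [h, ← hy]
        exact Sym2.eq_swap
      exact class_disjoint hv hn hsum hde hdf hxx hxy2 hyx hyy

lemma class_card_le_k {n k : ℕ} [NeZero n] {v : ZMod n → ℝ × ℝ}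
    (hv : ConvexCyclic v) (hn : 3 ≤ n) (E : Finset (Sym2 (ZMod n)))
    (hE : ∀ e ∈ E, ¬ e.IsDiag) (hfree : NoDisjointEdges v E k) (s : ZMod n) :
    (E.filter (fun e => eSum e = s)).card ≤ k := by
  by_contra h
  push_neg at h
  obtain ⟨S, hSsub, hScard⟩ := Finset.exists_subset_card_eq h
  apply hfree
  refine ⟨S, fun e he => (Finset.mem_filter.1 (hSsub he)).1, hScard, ?_⟩
  intro e he f hf hne
  have he' := Finset.mem_filter.1 (hSsub he)
  have hf' := Finset.mem_filter.1 (hSsub hf)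
  exact class_seg_disjoint hv hn he'.2 hf'.2 (hE e he'.1) (hE f hf'.1) hne

lemma sym2_two_elems {n : ℕ} {e : Sym2 (ZMod n)} (hd : ¬ e.IsDiag) :
    ∃ x y : ZMod n, x ≠ y ∧ e = s(x, y) := by
  induction e with
  | _ x y =>
    rw [Sym2.mk_isDiag_iff] at hd
    exact ⟨x, y, hd, rfl⟩

lemma class_card_arc {n : ℕ} [NeZero n] (E : Finset (Sym2 (ZMod n)))
    (hE : ∀ e ∈ E, ¬ e.IsDiag) (A : Finset (ZMod n))
    (hout : ∀ e ∈ E, ∃ z ∈ e, z ∉ A) (s : ZMod n) :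
    2 * (E.filter (fun e => eSum e = s)).card ≤
      (Finset.univ.filter (fun z : ZMod n => z ∉ A)).card +
      (A.filter (fun z => s - z ∉ A)).card := by
  classical
  set Es := E.filter (fun e => eSum e = s) with hEs
  set out : Sym2 (ZMod n) → Finset (ZMod n) :=
    fun e => Finset.univ.filter (fun z => z ∈ e ∧ z ∉ A) with hodef
  have hsame : ∀ e ∈ Es, ∀ f ∈ Es, ∀ z : ZMod n, z ∈ e → z ∈ f → e = f := by
    intro e he f hf z hze hzf
    have he' := Finset.mem_filter.1 he
    have hf' := Finset.mem_filter.1 hf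
    rw [edge_eq_of_mem he'.2 hze, edge_eq_of_mem hf'.2 hzf]
  have hone : ∀ e ∈ Es, 1 ≤ (out e).card := by
    intro e he
    obtain ⟨z, hz, hzA⟩ := hout e (Finset.mem_filter.1 he).1
    refine Finset.card_pos.2 ⟨z, ?_⟩
    simp [hodef, hz, hzA]
  have hsum_out : (Es.sum fun e => (out e).card) ≤
      (Finset.univ.filter (fun z : ZMod n => z ∉ A)).card := by
    rw [← Finset.card_biUnion]
    · apply Finset.card_le_card
      intro z hz
      rw [Finset.mem_biUnion] at hz
      obtain ⟨e, _, hze⟩ := hz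
      simp only [hodef, Finset.mem_filter, Finset.mem_univ, true_and] at hze ⊢
      exact hze.2
    · intro e he f hf hne
      rw [Function.onFun_apply, Finset.disjoint_left]
      intro z hze hzf
      simp only [hodef, Finset.mem_filter, Finset.mem_univ, true_and] at hze hzf
      exact hne (hsame e he f hf z hze.1 hzf.1)
  set E1 := Es.filter (fun e => (out e).card = 1) with hE1
  have hex_all : ∀ e ∈ E1, ∃ z, z ∈ e ∧ z ∈ A := by
    intro e he
    have he1 := Finset.mem_filter.1 he
    obtain ⟨x, y, hxy, rfl⟩ := sym2_two_elems (hE _ (Finset.mem_filter.1 he1.1).1)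
    by_contra hc
    push_neg at hc
    have hx : x ∉ A := hc x (by simp)
    have hy : y ∉ A := hc y (by simp)
    have hsub : ({x, y} : Finset (ZMod n)) ⊆ out s(x, y) := by
      intro z hz
      simp only [Finset.mem_insert, Finset.mem_singleton] at hz
      rcases hz with rfl | rfl <;> simp [hodef, hx, hy]
    have h2 : 2 ≤ (out s(x, y)).card := by
      calc 2 = ({x, y} : Finset (ZMod n)).card := by
            rw [Finset.card_insert_of_notMem (by simpa using hxy), Finset.card_singleton]
        _ ≤ _ := Finset.card_le_card hsub
    have h1 := he1.2
    omega
  have hE1card : E1.card ≤ (A.filter (fun z => s - z ∉ A)).card := by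
    set f : Sym2 (ZMod n) → ZMod n :=
      fun e => if h : ∃ z, z ∈ e ∧ z ∈ A then h.choose else 0 with hfdef
    have hfmem : ∀ e ∈ E1, f e ∈ e ∧ f e ∈ A := by
      intro e he
      have hex := hex_all e he
      have : f e = hex.choose := by rw [hfdef]; simp only [dif_pos hex]
      rw [this]
      exact hex.choose_spec
    apply Finset.card_le_card_of_injOn f
    · intro e he
      have he1 := Finset.mem_filter.1 he
      have hes : eSum e = s := (Finset.mem_filter.1 he1.1).2
      have hfe := hfmem e he
      rw [Finset.mem_coe, Finset.mem_filter]
      refine ⟨hfe.2, ?_⟩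
      intro hsz
      have hee : e = s(f e, s - f e) := edge_eq_of_mem hes hfe.1
      have hempty : out e = ∅ := by
        rw [Finset.eq_empty_iff_forall_notMem]
        intro z hz
        simp only [hodef, Finset.mem_filter, Finset.mem_univ, true_and] at hz
        rw [hee, Sym2.mem_iff] at hz
        rcases hz.1 with rfl | rfl
        · exact hz.2 hfe.2
        · exact hz.2 hsz
      have h1 := he1.2
      rw [hempty] at h1
      simp at h1
    · intro e he e' he' hff
      have h1 := hfmem e he
      have h2 := hfmem e' he'
      rw [hff] at h1
      exact hsame e (Finset.mem_filter.1 he).1 e' (Finset.mem_filter.1 he').1 (f e') h1.1 h2.1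
  -- final counting
  have hsplit := Finset.card_filter_add_card_filter_not
    (s := Es) (p := fun e => (out e).card = 1)
  have hsum_split := Finset.sum_filter_add_sum_filter_not Es
    (fun e => (out e).card = 1) (fun e => (out e).card)
  have hs1 : (Es.filter (fun e => (out e).card = 1)).sum (fun e => (out e).card) =
      E1.card := by
    rw [Finset.sum_congr rfl (fun e he => (Finset.mem_filter.1 he).2)]
    simp [hE1]
  have hs2 : 2 * (Es.filter (fun e => ¬ (out e).card = 1)).card ≤
      (Es.filter (fun e => ¬ (out e).card = 1)).sum (fun e => (out e).card) := by
    have h := Finset.card_nsmul_le_sum (Es.filter (fun e => ¬ (out e).card = 1))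
      (fun e => (out e).card) 2 (fun e he => by
        have hm := Finset.mem_filter.1 he
        have h2 := hone e hm.1
        show 2 ≤ (out e).card
        omega)
    simpa [mul_comm] using h
  have hE1eq : E1.card = (Es.filter (fun e => (out e).card = 1)).card := rfl
  omega

lemma mem_arc_iff {n : ℕ} [NeZero n] (a z : ZMod n) (q : ℕ) :
    z ∈ arcFrom n a q ↔ ∃ i : ℕ, i < q ∧ z = a + (i : ZMod n) := by
  simp [arcFrom]
  constructor
  · rintro ⟨i, hi, h⟩
    exact ⟨i, hi, by rw [h]; ring⟩
  · rintro ⟨i, hi, rfl⟩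
    exact ⟨i, hi, by ring⟩

lemma arc_eq_image {n : ℕ} [NeZero n] (a : ZMod n) (q : ℕ) :
    arcFrom n a q = (Finset.range q).image (fun i : ℕ => a + (i : ZMod n)) := by
  ext z
  rw [mem_arc_iff, Finset.mem_image]
  constructor
  · rintro ⟨i, hi, rfl⟩; exact ⟨i, Finset.mem_range.2 hi, rfl⟩
  · rintro ⟨i, hi, rfl⟩; exact ⟨i, Finset.mem_range.1 hi, rfl⟩

lemma arc_card {n : ℕ} [NeZero n] (a : ZMod n) {q : ℕ} (hq : q ≤ n) :
    (arcFrom n a q).card = q := by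
  rw [arc_eq_image, Finset.card_image_of_injOn, Finset.card_range]
  intro i hi j hj hij
  rw [Finset.mem_coe, Finset.mem_range] at hi hj
  have h2 : (i : ZMod n) = (j : ZMod n) := by
    have := congrArg (fun t => t - a) hij
    simpa using this
  have := congrArg ZMod.val h2
  rwa [ZMod.val_cast_of_lt (by omega), ZMod.val_cast_of_lt (by omega)] at this

lemma mem_arc {n : ℕ} [NeZero n] (a : ZMod n) {q w : ℕ} (hw : w < q) :
    a + (w : ZMod n) ∈ arcFrom n a q :=
  (mem_arc_iff a _ q).2 ⟨w, hw, rfl⟩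

lemma W_card {n : ℕ} [NeZero n] (a : ZMod n) {q m' : ℕ} (hqn : q < n) (hm : m' < n) :
    ((arcFrom n a q).filter
      (fun z => (a + a + (m' : ZMod n)) - z ∉ arcFrom n a q)).card ≤
      (if m' < q then q - 1 - m' else m' - q + 1) := by
  classical
  have hsub : ∀ (T : Finset ℕ), (∀ i : ℕ, i < q →
        ((a + a + (m' : ZMod n)) - (a + (i : ZMod n)) ∉ arcFrom n a q) → i ∈ T) →
      ((arcFrom n a q).filter
        (fun z => (a + a + (m' : ZMod n)) - z ∉ arcFrom n a q)).card ≤ T.card := by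
    intro T hT
    calc ((arcFrom n a q).filter _).card
        ≤ (T.image (fun i : ℕ => a + (i : ZMod n))).card := by
          apply Finset.card_le_card
          intro z hz
          rw [Finset.mem_filter] at hz
          obtain ⟨hzA, hznot⟩ := hz
          obtain ⟨i, hi, rfl⟩ := (mem_arc_iff a z q).1 hzA
          exact Finset.mem_image.2 ⟨i, hT i hi hznot, rfl⟩
      _ ≤ T.card := Finset.card_image_le
  rcases lt_or_ge m' q with hcase | hcase
  · rw [if_pos hcase]
    calc _ ≤ (Finset.Ico (m' + 1) q).card := by
          apply hsub
          intro i hi hznot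
          rw [Finset.mem_Ico]
          refine ⟨?_, hi⟩
          by_contra hle
          push_neg at hle
          apply hznot
          have heq : (a + a + (m' : ZMod n)) - (a + (i : ZMod n)) =
              a + ((m' - i : ℕ) : ZMod n) := by
            push_cast [Nat.cast_sub (show i ≤ m' by omega)]
            ring
          rw [heq]
          exact mem_arc a (by omega)
      _ = q - (m' + 1) := Nat.card_Ico _ _
      _ ≤ q - 1 - m' := by omega
  · rw [if_neg (by omega)]
    calc _ ≤ (Finset.range (m' - q + 1)).card := by
          apply hsub
          intro i hi hznot
          rw [Finset.mem_range]
          by_contra hle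
          push_neg at hle
          apply hznot
          have heq : (a + a + (m' : ZMod n)) - (a + (i : ZMod n)) =
              a + ((m' - i : ℕ) : ZMod n) := by
            push_cast [Nat.cast_sub (show i ≤ m' by omega)]
            ring
          rw [heq]
          exact mem_arc a (by omega)
      _ = m' - q + 1 := Finset.card_range _

lemma S1 : ∀ m : ℕ, (Finset.range m).sum (fun j => (j + 2) / 2) = (m + 1) * (m + 1) / 4 := by
  intro m
  induction m with
  | zero => simp
  | succ m ih =>
    rw [Finset.sum_range_succ, ih]
    rcases Nat.even_or_odd m with ⟨t, rfl⟩ | ⟨t, rfl⟩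
    · have e1 : (t + t + 1) * (t + t + 1) = 4 * (t * t) + 4 * t + 1 := by ring
      have e2 : (t + t + 1 + 1) * (t + t + 1 + 1) = 4 * (t * t) + 8 * t + 4 := by ring
      rw [e1, e2]
      set T := t * t
      omega
    · have e1 : (2 * t + 1 + 1) * (2 * t + 1 + 1) = 4 * (t * t) + 8 * t + 4 := by ring
      have e2 : (2 * t + 1 + 1 + 1) * (2 * t + 1 + 1 + 1) = 4 * (t * t) + 12 * t + 9 := by ring
      rw [e1, e2]
      set T := t * t
      omega

lemma arith_main {k ℓ : ℕ} (h1 : 1 ≤ ℓ) (h2 : ℓ < k) :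
    (Finset.range (2 * ℓ - 1)).sum
      (fun j => (2 * k - ℓ + (if j < ℓ then ℓ - 1 - j else j - ℓ + 1)) / 2) +
      ℓ * (ℓ + 1) / 2 ≤ (2 * ℓ - 1) * k := by
  classical
  set c : ℕ → ℕ := fun j => ((if j < ℓ then j + 1 else 2 * ℓ - 1 - j) + 1) / 2 with hc
  have hterm : ∀ j ∈ Finset.range (2 * ℓ - 1),
      (2 * k - ℓ + (if j < ℓ then ℓ - 1 - j else j - ℓ + 1)) / 2 = k - c j := by
    intro j hj
    rw [Finset.mem_range] at hj
    rw [hc]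
    by_cases h : j < ℓ <;> simp only [h, if_pos, if_neg, if_true, if_false] <;> omega
  rw [Finset.sum_congr rfl hterm]
  have hck : ∀ j ∈ Finset.range (2 * ℓ - 1), c j ≤ k := by
    intro j hj
    rw [Finset.mem_range] at hj
    rw [hc]
    by_cases h : j < ℓ <;> simp only [h, if_true, if_false] <;> omega
  have hsplit : (Finset.range (2 * ℓ - 1)).sum (fun j => k - c j) +
      (Finset.range (2 * ℓ - 1)).sum c = (2 * ℓ - 1) * k := by
    rw [← Finset.sum_add_distrib]
    rw [Finset.sum_congr rfl (fun j hj => by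
      have := hck j hj
      omega : ∀ j ∈ Finset.range (2 * ℓ - 1), k - c j + c j = k)]
    rw [Finset.sum_const, smul_eq_mul]
    rw [Finset.card_range]
  -- evaluate sum of c
  have hsumc : ℓ * (ℓ + 1) / 2 ≤ (Finset.range (2 * ℓ - 1)).sum c := by
    have hre : 2 * ℓ - 1 = ℓ + (ℓ - 1) := by omega
    rw [hre]
    rw [Finset.sum_range_add]
    have hfirst : (Finset.range ℓ).sum (fun j => c j) =
        (Finset.range ℓ).sum (fun j => (j + 2) / 2) := by
      apply Finset.sum_congr rfl
      intro j hj
      rw [Finset.mem_range] at hj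
      rw [hc]
      simp only [if_pos hj]
    have hsecond : (Finset.range (ℓ - 1)).sum (fun j => c (ℓ + j)) =
        (Finset.range (ℓ - 1)).sum (fun j => (ℓ - j) / 2) := by
      apply Finset.sum_congr rfl
      intro j hj
      rw [Finset.mem_range] at hj
      show ((if ℓ + j < ℓ then ℓ + j + 1 else 2 * ℓ - 1 - (ℓ + j)) + 1) / 2 = (ℓ - j) / 2
      rw [if_neg (by omega)]
      omega
    have hrefl : (Finset.range (ℓ - 1)).sum (fun j => (ℓ - j) / 2) =
        (Finset.range (ℓ - 1)).sum (fun j => (j + 2) / 2) := by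
      rw [← Finset.sum_range_reflect]
      apply Finset.sum_congr rfl
      intro j hj
      rw [Finset.mem_range] at hj
      congr 1
      omega
    rw [hfirst, hsecond, hrefl, S1, S1]
    have hl1 : ℓ - 1 + 1 = ℓ := by omega
    rw [hl1]
    -- (ℓ+1)²/4 + ℓ²/4 ≥ ℓ(ℓ+1)/2
    rcases Nat.even_or_odd ℓ with ⟨m, rfl⟩ | ⟨m, rfl⟩
    · have e1 : (m + m + 1) * (m + m + 1) = 4 * (m * m) + 4 * m + 1 := by ring
      have e2 : (m + m) * (m + m) = 4 * (m * m) := by ring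
      have e3 : (m + m) * (m + m + 1) = 4 * (m * m) + 2 * m := by ring
      rw [e1, e2, e3]
      set M := m * m
      omega
    · have e1 : (2 * m + 1 + 1) * (2 * m + 1 + 1) = 4 * (m * m) + 8 * m + 4 := by ring
      have e2 : (2 * m + 1) * (2 * m + 1) = 4 * (m * m) + 4 * m + 1 := by ring
      have e3 : (2 * m + 1) * (2 * m + 1 + 1) = 4 * (m * m) + 6 * m + 2 := by ring
      rw [e1, e2, e3]
      set M := m * m
      omega
  omega

/-- Upper bound of Theorem 1.3(2): a convex geometric graph on `n` vertices with no
`k+1` pairwise disjoint edges that admits an independent arc of `q = n − 2k + ℓ`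
consecutive boundary vertices (`0 < ℓ < k`) has at most `k·n − ℓ(ℓ+1)/2` edges. -/
theorem upper_bound_q_mid (n k ℓ q : ℕ) [NeZero n] (hk1 : 1 ≤ k) (hk2 : k ≤ n / 2 - 1)
    (hℓ1 : 0 < ℓ) (hℓ2 : ℓ < k) (hq : q = n - 2 * k + ℓ)
    (v : ZMod n → ℝ × ℝ) (hv : ConvexCyclic v)
    (E : Finset (Sym2 (ZMod n))) (hE : ∀ e ∈ E, ¬ e.IsDiag)
    (hfree : NoDisjointEdges v E k)
    (a : ZMod n) (hindep : ∀ e ∈ E, ¬ ∀ x ∈ e, x ∈ arcFrom n a q) :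
    E.card ≤ k * n - ℓ * (ℓ + 1) / 2 := by
  classical
  have hn2k : 2 * k + 2 ≤ n := by omega
  have hn : 3 ≤ n := by omega
  have hqn : q < n := by omega
  have hq3 : 3 ≤ q := by omega
  set A := arcFrom n a q with hA
  have hAc : (Finset.univ.filter (fun z : ZMod n => z ∉ A)).card = 2 * k - ℓ := by
    have h1 : Finset.univ.filter (fun z : ZMod n => z ∉ A) = Finset.univ \ A := by
      ext z
      simp [Finset.mem_sdiff]
    rw [h1, Finset.card_sdiff_of_subset (Finset.subset_univ A), Finset.card_univ, ZMod.card,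
      hA, arc_card a hqn.le]
    omega
  have hout : ∀ e ∈ E, ∃ z ∈ e, z ∉ A := by
    intro e he
    have := hindep e he
    push_neg at this
    exact this
  have hfib : E.card =
      Finset.univ.sum (fun s : ZMod n => (E.filter (fun e => eSum e = s)).card) :=
    Finset.card_eq_sum_card_fiberwise (fun e _ => Finset.mem_univ _)
  set S : Finset (ZMod n) :=
    (Finset.range (2 * ℓ - 1)).image (fun j => a + a + ((q - ℓ + j : ℕ) : ZMod n)) with hS
  have hmlt : ∀ j, j < 2 * ℓ - 1 → q - ℓ + j < n := by
    intro j hj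
    omega
  have hSinj : ∀ x ∈ Finset.range (2 * ℓ - 1), ∀ y ∈ Finset.range (2 * ℓ - 1),
      (fun j => a + a + ((q - ℓ + j : ℕ) : ZMod n)) x =
      (fun j => a + a + ((q - ℓ + j : ℕ) : ZMod n)) y → x = y := by
    intro x hx y hy hxy
    rw [Finset.mem_range] at hx hy
    simp only at hxy
    have h2 : ((q - ℓ + x : ℕ) : ZMod n) = ((q - ℓ + y : ℕ) : ZMod n) := by
      have := congrArg (fun t => t - (a + a)) hxy
      simpa using this
    have := congrArg ZMod.val h2
    rw [ZMod.val_cast_of_lt (hmlt x hx), ZMod.val_cast_of_lt (hmlt y hy)] at this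
    omega
  have hScard : S.card = 2 * ℓ - 1 := by
    rw [hS, Finset.card_image_of_injOn hSinj, Finset.card_range]
  have hsplit := Finset.sum_sdiff (f := fun s : ZMod n => (E.filter (fun e => eSum e = s)).card)
    (Finset.subset_univ S)
  have hrest : ((Finset.univ \ S).sum
      (fun s : ZMod n => (E.filter (fun e => eSum e = s)).card)) ≤ (n - (2 * ℓ - 1)) * k := by
    calc _ ≤ (Finset.univ \ S).card * k := by
          rw [← smul_eq_mul]
          apply Finset.sum_le_card_nsmul
          intro s _
          exact class_card_le_k hv hn E hE hfree s
      _ = (n - (2 * ℓ - 1)) * k := by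
          rw [Finset.card_sdiff_of_subset (Finset.subset_univ S), Finset.card_univ, ZMod.card, hScard]
  have hSsum : (S.sum (fun s : ZMod n => (E.filter (fun e => eSum e = s)).card)) ≤
      (Finset.range (2 * ℓ - 1)).sum
        (fun j => (2 * k - ℓ + (if j < ℓ then ℓ - 1 - j else j - ℓ + 1)) / 2) := by
    rw [hS, Finset.sum_image hSinj]
    apply Finset.sum_le_sum
    intro j hj
    rw [Finset.mem_range] at hj
    set s : ZMod n := a + a + ((q - ℓ + j : ℕ) : ZMod n) with hsdef
    have harc := class_card_arc E hE A hout s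
    have hW := W_card a (m' := q - ℓ + j) hqn (hmlt j hj)
    rw [← hA, ← hsdef] at hW
    have hWt : (if q - ℓ + j < q then q - 1 - (q - ℓ + j) else (q - ℓ + j) - q + 1) =
        (if j < ℓ then ℓ - 1 - j else j - ℓ + 1) := by
      by_cases h : j < ℓ
      · rw [if_pos (by omega), if_pos h]
        omega
      · rw [if_neg (by omega), if_neg h]
        omega
    rw [hWt] at hW
    rw [hAc] at harc
    omega
  have harith := arith_main hℓ1 hℓ2
  have h2ln : 2 * ℓ - 1 ≤ n := by omega
  have hXY : (n - (2 * ℓ - 1)) * k = k * n - (2 * ℓ - 1) * k := by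
    rw [Nat.sub_mul, Nat.mul_comm]
  have hYX : (2 * ℓ - 1) * k ≤ k * n := by
    rw [Nat.mul_comm k n]
    exact Nat.mul_le_mul_right k h2ln
  have hsplit2 : ((Finset.univ \ S).sum fun s => (E.filter (fun e => eSum e = s)).card) +
      (S.sum fun s => (E.filter (fun e => eSum e = s)).card) =
      (Finset.univ.sum fun s : ZMod n => (E.filter (fun e => eSum e = s)).card) := hsplit
  rw [hXY] at hrest
  set P := k * n with hP
  set Y := (2 * ℓ - 1) * k with hY
  set L2 := ℓ * (ℓ + 1) / 2 with hL2
  omega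
end
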